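/- arXiv:2408.04541 — 4 statements merged into one kernel-verified Lean document; each statement's English description precedes it below -/
import Mathlib

section
/- For every ψ > 0, log E[t̄r exp(ψ·V_U)] ≤ log E[t̄r exp(ψ·V_W)], where exp denotes the matrix exponential and t̄r the normalized trace (1/n)·Tr. -/
open MeasureTheory ProbabilityTheory Matrix

/-- The spectral norm of a real square matrix. -/
noncomputable def specNorm {n : ℕ} (A : Matrix (Fin n) (Fin n) ℝ) : ℝ :=
  ‖Matrix.toEuclideanCLM (𝕜 := ℝ) A‖

/-- The `‖·‖_∞` norm of a matrix: maximum absolute row sum. -/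
noncomputable def rowSumNorm {n : ℕ} (A : Matrix (Fin n) (Fin n) ℝ) : ℝ :=
  ⨆ i, ∑ j, |A i j|

/-! Clamping by `min · 1` is 1-Lipschitz, so a resampling difference of `U` is entrywise at most
`|x - x'| • A(t,L)` in absolute value, whose square is the corresponding squared difference of `W`;
hence `|(Û - Û^{(t,L)})²| ≤ (Ŵ - Ŵ^{(t,L)})²` entrywise, conditional expectation preserves this,
and `|V_U| ≤ V_W` entrywise. Through the power series, `|M| ≤ P` entrywise gives
`|tr exp M| ≤ tr exp P`. The left-hand expectation is positive because `V_U` is symmetric, so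
`exp (ψ V_U) = Xᵀ X` with `X = exp (ψ V_U / 2)` invertible. -/

open NormedSpace
open scoped Nat

theorem Fintype.sum_smul_sub_sum_ite_smul {K R M : Type*} [Fintype K] [DecidableEq K] [Ring R]
    [AddCommGroup M] [Module R M] (x : K → R) (A : K → M) (k : K) (y : R) :
    ∑ k', x k' • A k' - ∑ k', (if k' = k then y else x k') • A k' = (x k - y) • A k := by
  rw [← Finset.sum_sub_distrib, Finset.sum_eq_single k]
  · simp [sub_smul]
  · intro k' _ hk'
    simp [hk']
  · simp

namespace Matrix

theorem abs_map_min_sub_map_min_apply_le {ι : Type*} (M A : Matrix ι ι ℝ) (hA : ∀ i j, 0 ≤ A i j)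
    (b c : ℝ) (i j : ι) :
    |(M.map (min · b) - (M - c • A).map (min · b)) i j| ≤ |c| * A i j := by
  calc |(M.map (min · b) - (M - c • A).map (min · b)) i j|
      ≤ max |M i j - (M - c • A) i j| |b - b| := abs_min_sub_min_le_max _ _ _ _
    _ = |c| * A i j := by simp [abs_mul, abs_of_nonneg (hA i j), mul_nonneg, hA]

variable {ι : Type*} [Fintype ι] [DecidableEq ι]

theorem abs_pow_apply_le {M P : Matrix ι ι ℝ} (h : ∀ i j, |M i j| ≤ P i j) :
    ∀ (k : ℕ) (i j : ι), |(M ^ k) i j| ≤ (P ^ k) i j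
  | 0, i, j => by by_cases hij : i = j <;> simp [hij]
  | k + 1, i, j => by
    rw [pow_succ, pow_succ, mul_apply, mul_apply]
    refine (Finset.abs_sum_le_sum_abs _ _).trans (Finset.sum_le_sum fun l _ => ?_)
    rw [abs_mul]
    exact mul_le_mul (abs_pow_apply_le h k i l) (h l j) (abs_nonneg _)
      ((abs_nonneg _).trans (abs_pow_apply_le h k i l))

theorem abs_sq_apply_le_sq_smul_apply {D A : Matrix ι ι ℝ} {c : ℝ}
    (hD : ∀ i j, |D i j| ≤ |c| * A i j) (i j : ι) : |(D ^ 2) i j| ≤ ((c • A) ^ 2) i j := by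
  have h := abs_pow_apply_le (P := |c| • A) hD 2 i j
  rwa [smul_pow, sq_abs, ← smul_pow] at h

theorem abs_trace_pow_le {M P : Matrix ι ι ℝ} (h : ∀ i j, |M i j| ≤ P i j) (k : ℕ) :
    |(M ^ k).trace| ≤ (P ^ k).trace :=
  (Finset.abs_sum_le_sum_abs _ _).trans
    (Finset.sum_le_sum fun i _ => abs_pow_apply_le h k i i)

section Normed

attribute [local instance] Matrix.linftyOpNormedRing Matrix.linftyOpNormedAlgebra

theorem hasSum_trace_exp (M : Matrix ι ι ℝ) :
    HasSum (fun k : ℕ => (k !⁻¹ : ℝ) * (M ^ k).trace) (exp M).trace := by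
  have h := (exp_series_hasSum_exp' (𝕂 := ℝ) M).mapL (traceLinearMap ι ℝ ℝ).toContinuousLinearMap
  simp only [LinearMap.coe_toContinuousLinearMap', traceLinearMap_apply, trace_smul,
    smul_eq_mul] at h
  exact h

theorem continuous_trace_exp : Continuous fun M : Matrix ι ι ℝ => (exp M).trace :=
  exp_continuous.matrix_trace

end Normed

theorem abs_trace_exp_le {M P : Matrix ι ι ℝ} (h : ∀ i j, |M i j| ≤ P i j) :
    |(exp M).trace| ≤ (exp P).trace :=
  (hasSum_trace_exp M).norm_le_of_bounded (hasSum_trace_exp P) fun k => by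
    rw [Real.norm_eq_abs, abs_mul, abs_of_nonneg (by positivity)]
    exact mul_le_mul_of_nonneg_left (abs_trace_pow_le h k) (by positivity)

theorem trace_exp_pos [Nonempty ι] {M : Matrix ι ι ℝ} (hM : M.IsSymm) : 0 < (exp M).trace := by
  set X := exp ((1 / 2 : ℝ) • M)
  have hX : Xᴴ * X = exp M := by
    rw [conjTranspose_eq_transpose_of_trivial, (hM.smul _).exp.eq,
      ← exp_add_of_commute _ _ (Commute.refl _), ← add_smul]
    norm_num
  rw [← hX]
  exact (PosDef.conjTranspose_mul_self X (mulVec_injective_of_isUnit (isUnit_exp _))).trace_pos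

end Matrix

section EfronStein

variable {Ω : Type*} {m mΩ : MeasurableSpace Ω} {μ : Measure Ω}

theorem aestronglyMeasurable_matrix_of_apply {ι : Type*} [Countable ι] {M : Ω → Matrix ι ι ℝ}
    (h : ∀ i j, AEStronglyMeasurable (fun ω => M ω i j) μ) : AEStronglyMeasurable M μ :=
  (aemeasurable_pi_lambda _ fun i =>
    aemeasurable_pi_lambda _ fun j => (h i j).aemeasurable).aestronglyMeasurable

variable {K ι : Type*} [Fintype K] [Fintype ι] [DecidableEq ι]

theorem integrable_trace_exp [IsFiniteMeasure μ] {M : Ω → Matrix ι ι ℝ} {C : ℝ}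
    (hM : AEStronglyMeasurable M μ) (hC : ∀ᵐ ω ∂μ, ∀ i j, |M ω i j| ≤ C) :
    Integrable (fun ω => (exp (M ω)).trace) μ :=
  .of_bound (continuous_trace_exp.comp_aestronglyMeasurable hM) (exp (of fun _ _ => C)).trace
    (hC.mono fun _ h => abs_trace_exp_le h)

theorem log_integral_trace_exp_le [IsProbabilityMeasure μ] [Nonempty ι]
    {M P : Ω → Matrix ι ι ℝ} {C c : ℝ} (hc : 0 < c)
    (hM : AEStronglyMeasurable M μ) (hP : AEStronglyMeasurable P μ)
    (hMsymm : ∀ᵐ ω ∂μ, (M ω).IsSymm) (hMP : ∀ᵐ ω ∂μ, ∀ i j, |M ω i j| ≤ P ω i j)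
    (hPC : ∀ᵐ ω ∂μ, ∀ i j, |P ω i j| ≤ C) :
    Real.log (∫ ω, c * (exp (M ω)).trace ∂μ) ≤ Real.log (∫ ω, c * (exp (P ω)).trace ∂μ) := by
  have hMint : Integrable (fun ω => (exp (M ω)).trace) μ := by
    refine integrable_trace_exp (C := C) hM ?_
    filter_upwards [hMP, hPC] with ω h1 h2 i j using (h1 i j).trans ((le_abs_self _).trans (h2 i j))
  have hpos : 0 < ∫ ω, (exp (M ω)).trace ∂μ := by
    rw [integral_pos_iff_support_of_nonneg_ae (hMsymm.mono fun _ h => (trace_exp_pos h).le) hMint]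
    refine pos_iff_ne_zero.2 fun h0 => ?_
    obtain ⟨ω, hω, hsymm⟩ := ((measure_eq_zero_iff_ae_notMem.1 h0).and hMsymm).exists
    exact hω (trace_exp_pos hsymm).ne'
  rw [integral_const_mul, integral_const_mul]
  refine Real.log_le_log (mul_pos hc hpos) (mul_le_mul_of_nonneg_left ?_ hc.le)
  exact integral_mono_ae hMint (integrable_trace_exp hP hPC)
    (hMP.mono fun _ h => (le_abs_self _).trans (abs_trace_exp_le h))

noncomputable def efronSteinProxy (μ : Measure Ω) (m : MeasurableSpace Ω)
    (D : K → Ω → Matrix ι ι ℝ) (ω : Ω) : Matrix ι ι ℝ :=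
  of fun i j => (1 / 2) * ∑ k, (μ[fun ω' => (D k ω' ^ 2) i j | m]) ω

variable {D E : K → Ω → Matrix ι ι ℝ}

theorem aestronglyMeasurable_efronSteinProxy :
    AEStronglyMeasurable (efronSteinProxy μ m D) μ :=
  aestronglyMeasurable_matrix_of_apply fun _ _ =>
    (Finset.aestronglyMeasurable_fun_sum _ fun _ _ =>
      integrable_condExp.aestronglyMeasurable).const_mul _

theorem isSymm_efronSteinProxy (hD : ∀ k ω, (D k ω).IsSymm) (ω : Ω) :
    (efronSteinProxy μ m D ω).IsSymm :=
  IsSymm.ext fun i j => by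
    simp only [efronSteinProxy, of_apply, fun k ω => ((hD k ω).pow 2).apply i j]

theorem ae_abs_efronSteinProxy_le_of_bdd {C : ℝ} (hEC : ∀ k ω i j, |(E k ω ^ 2) i j| ≤ C) :
    ∀ᵐ ω ∂μ, ∀ i j, |efronSteinProxy μ m E ω i j| ≤ Fintype.card K * C / 2 := by
  have hk : ∀ k i j, ∀ᵐ ω ∂μ, |(μ[fun ω' => (E k ω' ^ 2) i j | m]) ω| ≤ C := fun k i j =>
    ae_bdd_abs_condExp_of_ae_bdd_abs (ae_of_all μ fun ω => hEC k ω i j)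
  filter_upwards [ae_all_iff.2 fun k => ae_all_iff.2 fun i => ae_all_iff.2 (hk k i)] with ω h i j
  calc |efronSteinProxy μ m E ω i j|
      ≤ (1 / 2) * ∑ k, |(μ[fun ω' => (E k ω' ^ 2) i j | m]) ω| := by
        rw [efronSteinProxy, of_apply, abs_mul, abs_of_pos one_half_pos]
        gcongr
        exact Finset.abs_sum_le_sum_abs _ _
    _ ≤ (1 / 2) * ∑ _k : K, C := by gcongr with k; exact h k i j
    _ = Fintype.card K * C / 2 := by rw [Finset.sum_const, nsmul_eq_mul, Finset.card_univ]; ring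

theorem ae_abs_efronSteinProxy_le_efronSteinProxy [IsFiniteMeasure μ] {C : ℝ}
    (hD : ∀ k, AEStronglyMeasurable (D k) μ) (hE : ∀ k, AEStronglyMeasurable (E k) μ)
    (hEC : ∀ k ω i j, |(E k ω ^ 2) i j| ≤ C)
    (hDE : ∀ k ω i j, |(D k ω ^ 2) i j| ≤ (E k ω ^ 2) i j) :
    ∀ᵐ ω ∂μ, ∀ i j, |efronSteinProxy μ m D ω i j| ≤ efronSteinProxy μ m E ω i j := by
  have hsq : ∀ {F : K → Ω → Matrix ι ι ℝ}, (∀ k, AEStronglyMeasurable (F k) μ) →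
      ∀ k i j, AEStronglyMeasurable (fun ω => (F k ω ^ 2) i j) μ := fun hF k i j =>
    ((continuous_id.pow 2).matrix_elem i j).comp_aestronglyMeasurable (hF k)
  have hEint : ∀ k i j, Integrable (fun ω => (E k ω ^ 2) i j) μ := fun k i j =>
    .of_bound (hsq hE k i j) C (ae_of_all _ fun ω => hEC k ω i j)
  have hDint : ∀ k i j, Integrable (fun ω => (D k ω ^ 2) i j) μ := fun k i j =>
    (hEint k i j).mono' (hsq hD k i j) (ae_of_all _ fun ω => hDE k ω i j)
  have hk : ∀ k i j, ∀ᵐ ω ∂μ, |(μ[fun ω' => (D k ω' ^ 2) i j | m]) ω| ≤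
      (μ[fun ω' => (E k ω' ^ 2) i j | m]) ω := fun k i j => by
    filter_upwards [abs_condExp_ae_le_condExp_abs (m := m) (μ := μ) fun ω => (D k ω ^ 2) i j,
      condExp_mono (m := m) (hDint k i j).abs (hEint k i j) (ae_of_all _ fun ω => hDE k ω i j)]
      with ω h1 h2 using h1.trans h2
  filter_upwards [ae_all_iff.2 fun k => ae_all_iff.2 fun i => ae_all_iff.2 (hk k i)] with ω h i j
  simp only [efronSteinProxy, of_apply]
  rw [abs_mul, abs_of_pos one_half_pos]
  gcongr
  exact (Finset.abs_sum_le_sum_abs _ _).trans (Finset.sum_le_sum fun k _ => h k i j)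

theorem log_integral_trace_exp_efronSteinProxy_le [IsProbabilityMeasure μ] [Nonempty ι]
    {C c ψ : ℝ} (hc : 0 < c) (hψ : 0 < ψ)
    (hD : ∀ k, AEStronglyMeasurable (D k) μ) (hE : ∀ k, AEStronglyMeasurable (E k) μ)
    (hDsymm : ∀ k ω, (D k ω).IsSymm) (hEC : ∀ k ω i j, |(E k ω ^ 2) i j| ≤ C)
    (hDE : ∀ k ω i j, |(D k ω ^ 2) i j| ≤ (E k ω ^ 2) i j) :
    Real.log (∫ ω, c * (exp (ψ • efronSteinProxy μ m D ω)).trace ∂μ) ≤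
      Real.log (∫ ω, c * (exp (ψ • efronSteinProxy μ m E ω)).trace ∂μ) := by
  have hscale : ∀ {a b : ℝ}, |a| ≤ b → |ψ * a| ≤ ψ * b := fun h => by
    rw [abs_mul, abs_of_pos hψ]; gcongr
  refine log_integral_trace_exp_le (C := ψ * (Fintype.card K * C / 2)) hc
    (aestronglyMeasurable_efronSteinProxy.const_smul ψ)
    (aestronglyMeasurable_efronSteinProxy.const_smul ψ)
    (ae_of_all _ fun ω => (isSymm_efronSteinProxy hDsymm ω).smul ψ) ?_ ?_
  · filter_upwards [ae_abs_efronSteinProxy_le_efronSteinProxy hD hE hEC hDE] with ω h i j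
      using hscale (h i j)
  · filter_upwards [ae_abs_efronSteinProxy_le_of_bdd hEC] with ω h i j using hscale (h i j)

end EfronStein

/-- Lemma 2. For every `ψ > 0`,
`log E[t̄r exp(ψ·V_U)] ≤ log E[t̄r exp(ψ·V_W)]`. -/
theorem log_trace_mgf_VU_le_VW
    {n : ℕ} {T : Type} [Fintype T] [DecidableEq T] [Nonempty T]
    (m : T → ℕ) (hm2 : ∀ t, 2 ≤ m t) (hmn : ∀ t, m t ≤ n)
    -- the deterministic subgraph adjacency matrices A(t,L)
    (A : (Σ t : T, Fin (m t) ↪ Fin n) → Matrix (Fin n) (Fin n) ℝ)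
    (hAsymm : ∀ k, (A k).IsSymm)
    (hAdiag : ∀ k i, A k i i = 0)
    (hA01 : ∀ k i j, A k i j = 0 ∨ A k i j = 1)
    (hAne : ∀ k, ∃ i j, A k i j ≠ 0)
    (hAsupp : ∀ k i j, A k i j ≠ 0 → (∃ a, k.2 a = i) ∧ (∃ b, k.2 b = j))
    -- the generating probabilities p(t,L)
    (p : (Σ t : T, Fin (m t) ↪ Fin n) → ℝ)
    (hp : ∀ k, p k ∈ Set.Icc (0 : ℝ) 1)
    -- the probability space, the Bernoulli family x(t,L) and the independent copies x'(t,L)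
    {Ω : Type} [MeasurableSpace Ω] (μ : Measure Ω) [IsProbabilityMeasure μ]
    (x x' : (Σ t : T, Fin (m t) ↪ Fin n) → Ω → ℝ)
    (hxmeas : ∀ k, Measurable (x k)) (hx'meas : ∀ k, Measurable (x' k))
    (hx01 : ∀ k ω, x k ω = 0 ∨ x k ω = 1) (hx'01 : ∀ k ω, x' k ω = 0 ∨ x' k ω = 1)
    (hxp : ∀ k, μ {ω | x k ω = 1} = ENNReal.ofReal (p k))
    (hx'p : ∀ k, μ {ω | x' k ω = 1} = ENNReal.ofReal (p k))
    (hindep : iIndepFun (Sum.elim x x') μ)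
    -- W(x), the resampled W(x^{(t,L)}), expectations and centered versions
    (W : Ω → Matrix (Fin n) (Fin n) ℝ)
    (hW : ∀ ω, W ω = ∑ k, x k ω • A k)
    (Wk : (Σ t : T, Fin (m t) ↪ Fin n) → Ω → Matrix (Fin n) (Fin n) ℝ)
    (hWk : ∀ k ω, Wk k ω = ∑ k', (if k' = k then x' k ω else x k' ω) • A k')
    (EW : Matrix (Fin n) (Fin n) ℝ)
    (hEW : ∀ i j, EW i j = ∫ ω, W ω i j ∂μ)
    (hatW : Ω → Matrix (Fin n) (Fin n) ℝ)
    (hhatW : ∀ ω, hatW ω = W ω - EW)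
    (hatWk : (Σ t : T, Fin (m t) ↪ Fin n) → Ω → Matrix (Fin n) (Fin n) ℝ)
    (hhatWk : ∀ k ω, hatWk k ω = Wk k ω - EW)
    -- the σ-algebra generated by the family x
    (mX : MeasurableSpace Ω)
    (hmX : mX = MeasurableSpace.comap (fun ω k => x k ω) MeasurableSpace.pi)
    -- the Efron–Stein variance proxy for the weighted model
    (VW : Ω → Matrix (Fin n) (Fin n) ℝ)
    (hVW : ∀ ω i j, VW ω i j =
      (1 / 2) * ∑ k, (μ[fun ω' => ((hatW ω' - hatWk k ω') ^ 2) i j | mX]) ω)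
    -- U(x), the resampled U(x^{(t,L)}), expectations and centered versions
    (U : Ω → Matrix (Fin n) (Fin n) ℝ)
    (hU : ∀ ω i j, U ω i j = min (W ω i j) 1)
    (Uk : (Σ t : T, Fin (m t) ↪ Fin n) → Ω → Matrix (Fin n) (Fin n) ℝ)
    (hUk : ∀ k ω i j, Uk k ω i j = min (Wk k ω i j) 1)
    (EU : Matrix (Fin n) (Fin n) ℝ)
    (hEU : ∀ i j, EU i j = ∫ ω, U ω i j ∂μ)
    (hatU : Ω → Matrix (Fin n) (Fin n) ℝ)
    (hhatU : ∀ ω, hatU ω = U ω - EU)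
    (hatUk : (Σ t : T, Fin (m t) ↪ Fin n) → Ω → Matrix (Fin n) (Fin n) ℝ)
    (hhatUk : ∀ k ω, hatUk k ω = Uk k ω - EU)
    -- the Efron–Stein variance proxy for the unweighted model
    (VU : Ω → Matrix (Fin n) (Fin n) ℝ)
    (hVU : ∀ ω i j, VU ω i j =
      (1 / 2) * ∑ k, (μ[fun ω' => ((hatU ω' - hatUk k ω') ^ 2) i j | mX]) ω)
    : ∀ ψ : ℝ, 0 < ψ →
      Real.log (∫ ω, (1 / (n : ℝ)) * (NormedSpace.exp (ψ • VU ω)).trace ∂μ) ≤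
      Real.log (∫ ω, (1 / (n : ℝ)) * (NormedSpace.exp (ψ • VW ω)).trace ∂μ) := by
  intro ψ hψ
  rcases isEmpty_or_nonempty (Fin n) with hn | hn
  · simp [Matrix.trace]
  have hWk' : ∀ k ω, Wk k ω = W ω - (x k ω - x' k ω) • A k := fun k ω => by
    rw [← Fintype.sum_smul_sub_sum_ite_smul (x · ω) A k (x' k ω), hW, hWk, sub_sub_cancel]
  have hUW : ∀ ω, U ω = (W ω).map (min · 1) := fun ω => ext (hU ω)
  have hUkW : ∀ k ω, Uk k ω = (W ω - (x k ω - x' k ω) • A k).map (min · 1) := fun k ω =>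
    ext fun i j => by rw [hUk, hWk']; rfl
  obtain rfl : VW = efronSteinProxy μ mX fun k ω => (x k ω - x' k ω) • A k :=
    funext fun ω => ext fun i j => by
      simp only [hVW, hhatW, hhatWk, hWk', sub_sub_sub_cancel_right, sub_sub_cancel]; rfl
  obtain rfl : VU = efronSteinProxy μ mX fun k ω =>
      (W ω).map (min · 1) - (W ω - (x k ω - x' k ω) • A k).map (min · 1) :=
    funext fun ω => ext fun i j => by
      simp only [hVU, hhatU, hhatUk, sub_sub_sub_cancel_right, hUW, hUkW]; rfl
  have hWsymm : ∀ ω, (W ω).IsSymm := fun ω => hW ω ▸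
    Finset.sum_induction _ IsSymm (fun _ _ => IsSymm.add) isSymm_zero
      fun k _ => (hAsymm k).smul _
  have hA0 : ∀ k i j, 0 ≤ A k i j := fun k i j => by rcases hA01 k i j with h | h <;> simp [h]
  obtain ⟨C, hC⟩ := Finite.exists_le fun q : (Σ t : T, Fin (m t) ↪ Fin n) × Fin n × Fin n =>
    |(A q.1 ^ 2) q.2.1 q.2.2|
  have hΔbdd : ∀ k ω i j, |(((x k ω - x' k ω) • A k) ^ 2) i j| ≤ C := fun k ω i j => by
    have hx : |(x k ω - x' k ω) ^ 2| ≤ 1 := by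
      rcases hx01 k ω with h | h <;> rcases hx'01 k ω with h' | h' <;> simp [h, h']
    rw [smul_pow, Matrix.smul_apply, smul_eq_mul, abs_mul]
    exact (mul_le_of_le_one_left (abs_nonneg _) hx).trans (hC (k, i, j))
  have hΔmeas := fun k =>
    ((hxmeas k).sub (hx'meas k)).aestronglyMeasurable (μ := μ) |>.smul_const (A k)
  have hWmeas := (Finset.aestronglyMeasurable_fun_sum Finset.univ fun k _ =>
    (hxmeas k).aestronglyMeasurable (μ := μ) |>.smul_const (A k)).congr
    (ae_of_all _ fun ω => (hW ω).symm)
  have hclamp : Continuous fun M : Matrix (Fin n) (Fin n) ℝ => M.map (min · 1) :=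
    continuous_id.matrix_map (continuous_id.min continuous_const)
  exact log_integral_trace_exp_efronSteinProxy_le
    (one_div_pos.2 (Nat.cast_pos.2 (Fin.pos_iff_nonempty.2 hn))) hψ
    (fun k => (hclamp.comp_aestronglyMeasurable hWmeas).sub
      (hclamp.comp_aestronglyMeasurable (hWmeas.sub (hΔmeas k))))
    hΔmeas (fun k ω => ((hWsymm ω).map _).sub (((hWsymm ω).sub ((hAsymm k).smul _)).map _))
    hΔbdd fun k ω =>
      abs_sq_apply_le_sq_smul_apply (abs_map_min_sub_map_min_apply_le _ _ (hA0 k) _ _)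
end

section
/- The variance statistic v² := ‖ Σ_{t,L} p(t,L)(1 − p(t,L)) · A(t,L)² ‖₂ satisfies v² ≤ M · Δ_w. -/
open MeasureTheory ProbabilityTheory Matrix

set_option linter.unusedVariables false

lemma specNorm_le_bound {n : ℕ} (S : Matrix (Fin n) (Fin n) ℝ) (hS : S.IsSymm)
    {C : ℝ} (hC : 0 ≤ C) (h : ∀ i, ∑ j, |S i j| ≤ C) : specNorm S ≤ C := by
  rw [specNorm]
  refine ContinuousLinearMap.opNorm_le_bound _ hC fun x => ?_
  have hx : ∀ i, (Matrix.toEuclideanCLM (𝕜 := ℝ) S x) i = ∑ j, S i j * x j := by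
    intro i
    have h2 := congrFun (Matrix.ofLp_toEuclideanCLM (𝕜 := ℝ) S x) i
    simpa [Matrix.mulVec, dotProduct] using h2
  have key : ∑ i, (∑ j, S i j * x j) ^ 2 ≤ C ^ 2 * ∑ j, (x j) ^ 2 := by
    have step1 : ∀ i : Fin n, (∑ j, S i j * x j) ^ 2 ≤
        (∑ j, |S i j|) * (∑ j, |S i j| * (x j) ^ 2) := by
      intro i
      calc (∑ j, S i j * x j) ^ 2 ≤ (∑ j, |S i j| * |x j|) ^ 2 := by
            rw [← sq_abs]
            apply pow_le_pow_left₀ (abs_nonneg _)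
            calc |∑ j, S i j * x j| ≤ ∑ j, |S i j * x j| := Finset.abs_sum_le_sum_abs _ _
              _ = ∑ j, |S i j| * |x j| := by simp [abs_mul]
        _ ≤ (∑ j, |S i j|) * (∑ j, |S i j| * (x j) ^ 2) := by
            apply Finset.sum_sq_le_sum_mul_sum_of_sq_eq_mul
            · intro j _; exact abs_nonneg _
            · intro j _; exact mul_nonneg (abs_nonneg _) (sq_nonneg _)
            · intro j _; rw [mul_pow, sq_abs (x j)]; ring
    calc ∑ i, (∑ j, S i j * x j) ^ 2
        ≤ ∑ i, (∑ j, |S i j|) * (∑ j, |S i j| * (x j) ^ 2) :=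
          Finset.sum_le_sum fun i _ => step1 i
      _ ≤ ∑ i, C * (∑ j, |S i j| * (x j) ^ 2) := by
          apply Finset.sum_le_sum
          intro i _
          exact mul_le_mul_of_nonneg_right (h i)
            (Finset.sum_nonneg fun j _ => mul_nonneg (abs_nonneg _) (sq_nonneg _))
      _ = C * ∑ j, (x j) ^ 2 * ∑ i, |S i j| := by
          rw [← Finset.mul_sum]
          congr 1
          rw [Finset.sum_comm]
          refine Finset.sum_congr rfl fun j _ => ?_
          rw [Finset.mul_sum]
          exact Finset.sum_congr rfl fun i _ => mul_comm _ _
      _ ≤ C * ∑ j, (x j) ^ 2 * C := by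
          apply mul_le_mul_of_nonneg_left _ hC
          apply Finset.sum_le_sum
          intro j _
          apply mul_le_mul_of_nonneg_left _ (sq_nonneg _)
          calc ∑ i, |S i j| = ∑ i, |S j i| := by
                apply Finset.sum_congr rfl
                intro i _
                rw [← hS.apply i j]
            _ ≤ C := h j
      _ = C ^ 2 * ∑ j, (x j) ^ 2 := by rw [← Finset.sum_mul]; ring
  rw [EuclideanSpace.norm_eq, EuclideanSpace.norm_eq]
  have hrhs : C * Real.sqrt (∑ j, ‖x j‖ ^ 2) = Real.sqrt (C ^ 2 * ∑ j, ‖x j‖ ^ 2) := by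
    rw [Real.sqrt_mul (sq_nonneg C), Real.sqrt_sq hC]
  rw [hrhs]
  apply Real.sqrt_le_sqrt
  simpa [hx, Real.norm_eq_abs, sq_abs] using key
/-- The variance statistic
`v² = ‖Σ_{t,L} p(t,L)(1 − p(t,L))·A(t,L)²‖₂` satisfies `v² ≤ M·Δ_w`. -/
theorem variance_statistic_le
    {n : ℕ} {T : Type} [Fintype T] [DecidableEq T] [Nonempty T]
    (m : T → ℕ) (hm2 : ∀ t, 2 ≤ m t) (hmn : ∀ t, m t ≤ n)
    -- the deterministic subgraph adjacency matrices A(t,L)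
    (A : (Σ t : T, Fin (m t) ↪ Fin n) → Matrix (Fin n) (Fin n) ℝ)
    (hAsymm : ∀ k, (A k).IsSymm)
    (hAdiag : ∀ k i, A k i i = 0)
    (hA01 : ∀ k i j, A k i j = 0 ∨ A k i j = 1)
    (hAne : ∀ k, ∃ i j, A k i j ≠ 0)
    (hAsupp : ∀ k i j, A k i j ≠ 0 → (∃ a, k.2 a = i) ∧ (∃ b, k.2 b = j))
    -- the generating probabilities p(t,L)
    (p : (Σ t : T, Fin (m t) ↪ Fin n) → ℝ)
    (hp : ∀ k, p k ∈ Set.Icc (0 : ℝ) 1)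
    -- M and Δ_w
    (M : ℕ) (hM : M = Finset.univ.sup m)
    (Δw : ℝ) (hΔw : Δw = rowSumNorm (∑ k, p k • A k))
    -- the variance statistic v²
    (v2 : ℝ) (hv2 : v2 = specNorm (∑ k, (p k * (1 - p k)) • (A k ^ 2)))
    : v2 ≤ (M : ℝ) * Δw := by
  obtain ⟨t0⟩ := ‹Nonempty T›
  have hn : 0 < n := lt_of_lt_of_le (by norm_num) (le_trans (hm2 t0) (hmn t0))
  have hAnn : ∀ k i j, (0:ℝ) ≤ A k i j := fun k i j => by
    rcases hA01 k i j with h|h <;> simp [h]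
  have hAle1 : ∀ k i j, A k i j ≤ 1 := fun k i j => by
    rcases hA01 k i j with h|h <;> simp [h]
  set W := ∑ k, p k • A k with hWdef
  have hWnn : ∀ i j, 0 ≤ W i j := by
    intro i j
    rw [hWdef]
    simp only [Matrix.sum_apply, Matrix.smul_apply, smul_eq_mul]
    exact Finset.sum_nonneg fun k _ => mul_nonneg (hp k).1 (hAnn k i j)
  have hrowW : ∀ i, ∑ j, W i j ≤ Δw := by
    intro i
    rw [hΔw, rowSumNorm]
    have he : ∑ j, W i j = ∑ j, |W i j| :=
      Finset.sum_congr rfl fun j _ => (abs_of_nonneg (hWnn i j)).symm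
    rw [he]
    exact le_ciSup (f := fun i => ∑ j, |(∑ k, p k • A k) i j|)
      (Set.Finite.bddAbove (Set.finite_range _)) i
  have hΔnn : 0 ≤ Δw :=
    le_trans (Finset.sum_nonneg fun j _ => hWnn ⟨0,hn⟩ j) (hrowW ⟨0,hn⟩)
  have hrowA : ∀ k (i : Fin n), ∑ j, A k i j ≤ (M:ℝ) := by
    intro k i
    have hsub : ∑ j, A k i j = ∑ j ∈ Finset.univ.map k.2, A k i j := by
      symm
      apply Finset.sum_subset (Finset.subset_univ _)
      intro j _ hj
      by_contra hne
      obtain ⟨-, b, hb⟩ := hAsupp k i j hne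
      exact hj (Finset.mem_map.2 ⟨b, Finset.mem_univ _, hb⟩)
    rw [hsub]
    calc ∑ j ∈ Finset.univ.map k.2, A k i j ≤ ∑ _j ∈ Finset.univ.map k.2, (1:ℝ) :=
        Finset.sum_le_sum fun j _ => hAle1 k i j
      _ = (m k.1 : ℝ) := by simp
      _ ≤ (M : ℝ) := by
        exact_mod_cast hM ▸ Finset.le_sup (Finset.mem_univ k.1)
  have hsq : ∀ k (i j : Fin n), (A k ^ 2) i j = ∑ a, A k i a * A k a j := by
    intro k i j
    rw [pow_two, Matrix.mul_apply]
  rw [hv2]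
  apply specNorm_le_bound
  · show (∑ k, (p k * (1 - p k)) • (A k ^ 2))ᵀ = _
    rw [Matrix.transpose_sum]
    exact Finset.sum_congr rfl fun k _ => by rw [Matrix.transpose_smul, (hAsymm k).pow 2]
  · exact mul_nonneg (Nat.cast_nonneg M) hΔnn
  · intro i
    have hSnn : ∀ j, 0 ≤ (∑ k, (p k * (1 - p k)) • (A k ^ 2)) i j := by
      intro j
      simp only [Matrix.sum_apply, Matrix.smul_apply, smul_eq_mul]
      refine Finset.sum_nonneg fun k _ => mul_nonneg ?_ ?_
      · exact mul_nonneg (hp k).1 (by linarith [(hp k).2])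
      · rw [hsq]
        exact Finset.sum_nonneg fun a _ => mul_nonneg (hAnn k i a) (hAnn k a j)
    calc ∑ j, |(∑ k, (p k * (1 - p k)) • (A k ^ 2)) i j|
        = ∑ j, (∑ k, (p k * (1 - p k)) • (A k ^ 2)) i j :=
          Finset.sum_congr rfl fun j _ => abs_of_nonneg (hSnn j)
      _ = ∑ k, (p k * (1 - p k)) * ∑ j, (A k ^ 2) i j := by
          simp only [Matrix.sum_apply, Matrix.smul_apply, smul_eq_mul]
          rw [Finset.sum_comm]
          exact Finset.sum_congr rfl fun k _ => (Finset.mul_sum _ _ _).symm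
      _ ≤ ∑ k, p k * ((M : ℝ) * ∑ a, A k i a) := by
          apply Finset.sum_le_sum
          intro k _
          have h1 : ∑ j, (A k ^ 2) i j ≤ (M : ℝ) * ∑ a, A k i a := by
            calc ∑ j, (A k ^ 2) i j = ∑ a, A k i a * ∑ j, A k a j := by
                  simp_rw [hsq, Finset.mul_sum]
                  rw [Finset.sum_comm]
              _ ≤ ∑ a, A k i a * (M : ℝ) :=
                  Finset.sum_le_sum fun a _ =>
                    mul_le_mul_of_nonneg_left (hrowA k a) (hAnn k i a)
              _ = (M : ℝ) * ∑ a, A k i a := by rw [← Finset.sum_mul]; ring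
          have h2 : p k * (1 - p k) ≤ p k := by nlinarith [(hp k).1, (hp k).2]
          have h3 : 0 ≤ ∑ j, (A k ^ 2) i j := by
            refine Finset.sum_nonneg fun j _ => ?_
            rw [hsq]
            exact Finset.sum_nonneg fun a _ => mul_nonneg (hAnn k i a) (hAnn k a j)
          calc p k * (1 - p k) * ∑ j, (A k ^ 2) i j ≤ p k * ∑ j, (A k ^ 2) i j :=
                mul_le_mul_of_nonneg_right h2 h3
            _ ≤ p k * ((M : ℝ) * ∑ a, A k i a) :=
                mul_le_mul_of_nonneg_left h1 (hp k).1
      _ = (M : ℝ) * ∑ a, W i a := by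
          rw [hWdef]
          simp only [Matrix.sum_apply, Matrix.smul_apply, smul_eq_mul, Finset.mul_sum]
          rw [Finset.sum_comm]
          exact Finset.sum_congr rfl fun a _ => Finset.sum_congr rfl fun k _ => by ring
      _ ≤ (M : ℝ) * Δw := mul_le_mul_of_nonneg_left (hrowW i) (Nat.cast_nonneg M)
end

section
/- Under Assumptions (A5) and (A6), setting γ := max_{t∈T}(m_t − h_t − 1), one has γ ∈ (0,1] and Δ_w(n) = Θ(n^γ): there exist constants 0 < c₁ ≤ c₂ and N ∈ ℕ such that for all n ≥ N, c₁·n^γ ≤ Δ_w(n) ≤ c₂·n^γ. -/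
/-!
The entries of the expected adjacency matrix are nonnegative, so `Δ_w(n)` is its largest row sum
`∑_k p_n(k) (m_k - 1) [i ∈ L_k]`. By (A5) a summand of type `t` is at most `u_t m_t / n^{h_t}`, and
at most `m_t n^{m_t - 1}` lists of type `t` pass through a given vertex, so every row sum is
`O(∑_t n^{m_t - 1 - h_t}) = O(n^γ)`. For the lower bound take a type `t₀` attaining `γ`. By (A6)
and (A5), for every `j ≠ i` the entry `(i, j)` is at least `ξ l / n^h` times the number of lists
through `i` and `j`, which is at least `(n - 2)(n - 3)⋯(n - m + 1)`; summing over the `n - 1`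
choices of `j` gives at least `ξ l (n / 2)^(m - 1) / n^h`, a constant multiple of `n^γ`. Finally
`0 < γ ≤ 1` is `m - 2 < h < m - 1` at `t₀`.
-/

open MeasureTheory ProbabilityTheory Matrix Filter

/-- The adjacency matrix of the complete graph on the vertices of the ordered list `k.2`. -/
def completeSub {T : Type} {m : T → ℕ} (n : ℕ)
    (k : Σ t : T, Fin (m t) ↪ Fin n) : Matrix (Fin n) (Fin n) ℝ :=
  fun i j => if i ≠ j ∧ (∃ a, k.2 a = i) ∧ (∃ b, k.2 b = j) then 1 else 0

open Finset

section Bernoulli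

lemma eq_indicator_one_of_zero_or_one {Ω : Type*} {f : Ω → ℝ} (h01 : ∀ ω, f ω = 0 ∨ f ω = 1) :
    f = {ω | f ω = 1}.indicator 1 := by
  funext ω
  rcases h01 ω with h | h <;> simp [Set.indicator, h]

variable {Ω : Type*} [MeasurableSpace Ω] {μ : Measure Ω} {f : Ω → ℝ}

lemma integrable_of_zero_or_one [IsFiniteMeasure μ] (hf : Measurable f)
    (h01 : ∀ ω, f ω = 0 ∨ f ω = 1) : Integrable f μ := by
  rw [eq_indicator_one_of_zero_or_one h01]
  exact (integrable_const 1).indicator (hf (measurableSet_singleton 1))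

lemma integral_eq_measureReal_of_zero_or_one (hf : Measurable f) (h01 : ∀ ω, f ω = 0 ∨ f ω = 1) :
    ∫ ω, f ω ∂μ = μ.real {ω | f ω = 1} := by
  conv_lhs => rw [eq_indicator_one_of_zero_or_one h01]
  exact integral_indicator_one (hf (measurableSet_singleton 1))

lemma integral_sum_smul_apply_of_zero_or_one [IsFiniteMeasure μ] {ι κ κ' : Type*} [Fintype ι]
    {x : ι → Ω → ℝ} (hx : ∀ k, Measurable (x k)) (h01 : ∀ k ω, x k ω = 0 ∨ x k ω = 1)
    (A : ι → Matrix κ κ' ℝ) (i : κ) (j : κ') :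
    ∫ ω, (∑ k, x k ω • A k) i j ∂μ = ∑ k, μ.real {ω | x k ω = 1} * A k i j := by
  simp only [Matrix.sum_apply, Matrix.smul_apply, smul_eq_mul]
  rw [integral_finsetSum _ fun k _ => (integrable_of_zero_or_one (hx k) (h01 k)).mul_const _]
  simp only [integral_mul_const, integral_eq_measureReal_of_zero_or_one (hx _) (h01 _)]

end Bernoulli

lemma sum_abs_le_rowSumNorm {n : ℕ} (A : Matrix (Fin n) (Fin n) ℝ) (i : Fin n) :
    ∑ j, |A i j| ≤ rowSumNorm A :=
  le_ciSup (f := fun i => ∑ j, |A i j|) (Set.finite_range _).bddAbove i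

lemma rowSumNorm_le {n : ℕ} {A : Matrix (Fin n) (Fin n) ℝ} {c : ℝ}
    (h : ∀ i, ∑ j, |A i j| ≤ c) (hc : 0 ≤ c) : rowSumNorm A ≤ c :=
  Real.iSup_le h hc

section Embedding

variable {α β : Type*} [Fintype α] [DecidableEq α] [Fintype β] [DecidableEq β]

lemma card_embedding_apply_eq_le (a : α) (b : β) :
    #{L : α ↪ β | L a = b} ≤ Fintype.card β ^ (Fintype.card α - 1) := by
  calc #{L : α ↪ β | L a = b}
      ≤ #(univ : Finset ({x // x ≠ a} → β)) := by
        refine card_le_card_of_injOn (fun L x => L x) (fun _ _ => mem_coe.2 (mem_univ _)) ?_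
        intro L₁ h₁ L₂ h₂ hL
        simp only [coe_filter, mem_univ, true_and, Set.mem_ofPred_eq] at h₁ h₂
        refine DFunLike.ext _ _ fun x => ?_
        by_cases hx : x = a
        · rw [hx, h₁, h₂]
        · exact congr_fun hL ⟨x, hx⟩
    _ = Fintype.card β ^ (Fintype.card α - 1) := by
        rw [card_univ, Fintype.card_fun, Fintype.card_subtype_compl, Fintype.card_subtype_eq]

lemma card_embedding_mem_range_le (b : β) :
    #{L : α ↪ β | ∃ a, L a = b} ≤ Fintype.card α * Fintype.card β ^ (Fintype.card α - 1) := by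
  calc #{L : α ↪ β | ∃ a, L a = b}
      = #(univ.biUnion fun a => {L : α ↪ β | L a = b}) := by
        congr 1; ext L; simp
    _ ≤ ∑ a : α, #{L : α ↪ β | L a = b} := card_biUnion_le
    _ ≤ ∑ _a : α, Fintype.card β ^ (Fintype.card α - 1) :=
        sum_le_sum fun a _ => card_embedding_apply_eq_le a b
    _ = _ := by rw [sum_const, card_univ, smul_eq_mul]

lemma descFactorial_le_card_embedding_mem_range_pair {m : ℕ} (hm : 2 ≤ m) {i j : β} (hij : i ≠ j) :
    (Fintype.card β - 2).descFactorial (m - 2) ≤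
      Nat.card {L : Fin m ↪ β // (∃ a, L a = i) ∧ ∃ b, L b = j} := by
  obtain ⟨M, rfl⟩ : ∃ M, m = M + 2 := ⟨m - 2, by omega⟩
  have hcard : Fintype.card {v : β // v ≠ i ∧ v ≠ j} = Fintype.card β - 2 := by
    rw [Fintype.card_subtype, ← card_pair hij, ← card_univ, ← card_sdiff_of_subset (subset_univ _)]
    congr 1; ext v; simp
  let F : (Fin M ↪ {v : β // v ≠ i ∧ v ≠ j}) →
      {L : Fin (M + 2) ↪ β // (∃ a, L a = i) ∧ ∃ b, L b = j} := fun g =>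
    ⟨⟨Fin.cons i (Fin.cons j (Subtype.val ∘ g)), by
      refine Fin.cons_injective_iff.2 ⟨?_, Fin.cons_injective_iff.2
        ⟨fun ⟨c, hc⟩ => (g c).2.2 hc, Subtype.val_injective.comp g.injective⟩⟩
      rintro ⟨c, hc⟩
      cases c using Fin.cases with
      | zero => exact hij hc.symm
      | succ c => exact (g c).2.1 hc⟩, ⟨0, rfl⟩, ⟨1, rfl⟩⟩
  have hF : Function.Injective F := fun g₁ g₂ h =>
    DFunLike.ext _ _ fun c => Subtype.ext <| by
      simpa [F] using DFunLike.congr_fun (congrArg Subtype.val h) c.succ.succ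
  calc (Fintype.card β - 2).descFactorial (M + 2 - 2)
      = Nat.card (Fin M ↪ {v : β // v ≠ i ∧ v ≠ j}) := by
        rw [Nat.card_eq_fintype_card, Fintype.card_embedding_eq, Fintype.card_fin, hcard]; rfl
    _ ≤ _ := Nat.card_le_card_of_injective F hF

end Embedding

section CompleteSub

variable {T : Type} {m : T → ℕ} {n : ℕ}

lemma completeSub_nonneg (k : Σ t, Fin (m t) ↪ Fin n) (i j : Fin n) :
    0 ≤ completeSub n k i j := by
  unfold completeSub; split_ifs <;> norm_num

lemma sum_completeSub_apply (k : Σ t, Fin (m t) ↪ Fin n) (i : Fin n) :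
    ∑ j, completeSub n k i j = if ∃ a, k.2 a = i then (m k.1 : ℝ) - 1 else 0 := by
  split_ifs with hi
  · obtain ⟨a, rfl⟩ := hi
    have hrow : ({j | k.2 a ≠ j ∧ (∃ a', k.2 a' = k.2 a) ∧ ∃ b, k.2 b = j} : Finset (Fin n)) =
        (univ.map k.2).erase (k.2 a) := by
      ext j; simp [ne_comm]
    unfold completeSub
    rw [sum_boole, hrow, card_erase_of_mem (mem_map_of_mem _ (mem_univ a)), card_map, card_univ,
      Fintype.card_fin, Nat.cast_sub a.pos, Nat.cast_one]
  · exact sum_eq_zero fun j _ => if_neg fun h => hi h.2.1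

end CompleteSub

lemma rpow_natCast_sub_one_sub {x : ℝ} (hx : 0 < x) {M : ℕ} (hM : 1 ≤ M) (h : ℝ) :
    x ^ ((M : ℝ) - h - 1) = x ^ (M - 1) / x ^ h := by
  rw [show (M : ℝ) - h - 1 = ((M - 1 : ℕ) : ℝ) - h by push_cast [Nat.cast_sub hM]; ring,
    Real.rpow_sub hx, Real.rpow_natCast]

lemma half_pow_le_mul_descFactorial {n m : ℕ} (hm : 2 ≤ m) (hn : 2 * m ≤ n) :
    ((n : ℝ) / 2) ^ (m - 1) ≤ ((n - 1 : ℕ) : ℝ) * (n - 2).descFactorial (m - 2) := by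
  have hdesc : (n - 1) * (n - 2).descFactorial (m - 2) = (n - 1).descFactorial (m - 1) := by
    obtain ⟨N, rfl⟩ : ∃ N, n = N + 2 := ⟨n - 2, by omega⟩
    obtain ⟨M, rfl⟩ : ∃ M, m = M + 2 := ⟨m - 2, by omega⟩
    rw [show N + 2 - 1 = N + 1 by omega, show M + 2 - 1 = M + 1 by omega,
      Nat.succ_descFactorial_succ, Nat.add_sub_cancel, Nat.add_sub_cancel]
  have hbase : (n : ℝ) / 2 ≤ ((n - 1 + 1 - (m - 1) : ℕ) : ℝ) := by
    have hnR : (2 * m : ℝ) ≤ n := by exact_mod_cast hn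
    rw [show n - 1 + 1 - (m - 1) = n + 1 - m by omega, Nat.cast_sub (by omega)]
    push_cast
    linarith
  rw [← Nat.cast_mul, hdesc]
  calc ((n : ℝ) / 2) ^ (m - 1) ≤ ((n - 1 + 1 - (m - 1) : ℕ) : ℝ) ^ (m - 1) :=
        pow_le_pow_left₀ (by positivity) hbase _
    _ ≤ _ := by exact_mod_cast Nat.pow_sub_le_descFactorial (n - 1) (m - 1)

section ExpectedAdjacency

variable {T : Type} [Fintype T] {m : T → ℕ} {n : ℕ} {q : (Σ t, Fin (m t) ↪ Fin n) → ℝ}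

lemma sum_sum_smul_completeSub_apply (q : (Σ t, Fin (m t) ↪ Fin n) → ℝ) (i : Fin n) :
    ∑ j, (∑ k, q k • completeSub n k) i j =
      ∑ k, q k * if ∃ a, k.2 a = i then (m k.1 : ℝ) - 1 else 0 := by
  simp only [Matrix.sum_apply, Matrix.smul_apply, smul_eq_mul]
  rw [sum_comm]
  simp only [← mul_sum, sum_completeSub_apply]

lemma sum_smul_completeSub_apply_nonneg (hq : ∀ k, 0 ≤ q k) (i j : Fin n) :
    0 ≤ (∑ k, q k • completeSub n k) i j := by
  simp only [Matrix.sum_apply, Matrix.smul_apply, smul_eq_mul]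
  exact sum_nonneg fun k _ => mul_nonneg (hq k) (completeSub_nonneg k i j)

lemma card_embedding_mem_range_div_rpow_le {M : ℕ} (hM : 1 ≤ M) (hn : 1 ≤ n) (i : Fin n)
    {h γ : ℝ} (hγ : (M : ℝ) - h - 1 ≤ γ) :
    (#{L : Fin M ↪ Fin n | ∃ a, L a = i} : ℝ) / n ^ h ≤ M * n ^ γ := by
  have hn0 : (0 : ℝ) < n := by exact_mod_cast hn
  have hcard : #{L : Fin M ↪ Fin n | ∃ a, L a = i} ≤ M * n ^ (M - 1) := by
    convert card_embedding_mem_range_le (α := Fin M) i <;> simp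
  calc (#{L : Fin M ↪ Fin n | ∃ a, L a = i} : ℝ) / n ^ h ≤ M * (n : ℝ) ^ (M - 1) / n ^ h := by
        gcongr
        exact_mod_cast hcard
    _ = M * (n : ℝ) ^ ((M : ℝ) - h - 1) := by rw [rpow_natCast_sub_one_sub hn0 hM]; ring
    _ ≤ M * n ^ γ := by gcongr; exact_mod_cast hn

lemma rowSumNorm_sum_smul_completeSub_le (hm : ∀ t, 1 ≤ m t) (hn : 1 ≤ n) {u h : T → ℝ}
    {γ : ℝ} (hq0 : ∀ k, 0 ≤ q k) (hu : ∀ t, 0 ≤ u t) (hqu : ∀ k, q k ≤ u k.1 / n ^ h k.1)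
    (hγ : ∀ t, (m t : ℝ) - h t - 1 ≤ γ) :
    rowSumNorm (∑ k, q k • completeSub n k) ≤ (∑ t, (m t : ℝ) ^ 2 * u t) * n ^ γ := by
  have hn0 : (0 : ℝ) ≤ n := n.cast_nonneg
  refine rowSumNorm_le (fun i => ?_)
    (mul_nonneg (sum_nonneg fun t _ => mul_nonneg (sq_nonneg _) (hu t)) (by positivity))
  simp only [abs_of_nonneg (sum_smul_completeSub_apply_nonneg hq0 i _)]
  rw [sum_sum_smul_completeSub_apply, ← univ_sigma_univ, sum_sigma, sum_mul]
  refine sum_le_sum fun t _ => ?_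
  have hm1 : (1 : ℝ) ≤ m t := by exact_mod_cast hm t
  calc ∑ L, q ⟨t, L⟩ * (if ∃ a, L a = i then (m t : ℝ) - 1 else 0)
      ≤ ∑ L : Fin (m t) ↪ Fin n, if ∃ a, L a = i then u t / n ^ h t * m t else 0 := by
        refine sum_le_sum fun L _ => ?_
        split_ifs
        · exact mul_le_mul (hqu _) (by linarith) (by linarith) (by positivity [hu t])
        · rw [mul_zero]
    _ = (#{L : Fin (m t) ↪ Fin n | ∃ a, L a = i} : ℝ) / n ^ h t * (m t * u t) := by
        rw [← sum_filter, sum_const, nsmul_eq_mul]; ring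
    _ ≤ m t * n ^ γ * (m t * u t) := by
        gcongr
        · exact mul_nonneg (by linarith) (hu t)
        · exact card_embedding_mem_range_div_rpow_le (hm t) hn i (hγ t)
    _ = (m t : ℝ) ^ 2 * u t * n ^ γ := by ring

lemma card_mul_le_sum_smul_completeSub_apply (t : T) {i j : Fin n} (hij : i ≠ j) {c : ℝ}
    (hq0 : ∀ k, 0 ≤ q k) (hqc : ∀ L, 0 < q ⟨t, L⟩ → c ≤ q ⟨t, L⟩) :
    (Nat.card {L : Fin (m t) ↪ Fin n // ((∃ a, L a = i) ∧ ∃ b, L b = j) ∧ 0 < q ⟨t, L⟩} : ℝ) * c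
      ≤ (∑ k, q k • completeSub n k) i j := by
  classical
  rw [Nat.card_eq_fintype_card, Fintype.card_subtype, ← nsmul_eq_mul, ← sum_const]
  simp only [Matrix.sum_apply, Matrix.smul_apply, smul_eq_mul]
  rw [← univ_sigma_univ, sum_sigma]
  have hterm : ∀ t' L, 0 ≤ q ⟨t', L⟩ * completeSub n ⟨t', L⟩ i j :=
    fun t' L => mul_nonneg (hq0 _) (completeSub_nonneg _ i j)
  calc ∑ L ∈ {L : Fin (m t) ↪ Fin n | ((∃ a, L a = i) ∧ ∃ b, L b = j) ∧ 0 < q ⟨t, L⟩}, c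
      ≤ ∑ L ∈ {L : Fin (m t) ↪ Fin n | ((∃ a, L a = i) ∧ ∃ b, L b = j) ∧ 0 < q ⟨t, L⟩},
          q ⟨t, L⟩ * completeSub n ⟨t, L⟩ i j := by
        refine sum_le_sum fun L hL => ?_
        obtain ⟨hmem, hpos⟩ := (mem_filter.1 hL).2
        rw [show completeSub n ⟨t, L⟩ i j = 1 from if_pos ⟨hij, hmem⟩, mul_one]
        exact hqc L hpos
    _ ≤ ∑ L, q ⟨t, L⟩ * completeSub n ⟨t, L⟩ i j :=
        sum_le_sum_of_subset_of_nonneg (filter_subset _ _) fun L _ _ => hterm t L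
    _ ≤ ∑ t', ∑ L, q ⟨t', L⟩ * completeSub n ⟨t', L⟩ i j :=
        single_le_sum (f := fun t' => ∑ L, q ⟨t', L⟩ * completeSub n ⟨t', L⟩ i j)
          (fun t' _ => sum_nonneg fun L _ => hterm t' L) (mem_univ t)

lemma le_rowSumNorm_sum_smul_completeSub (t : T) (hm : 2 ≤ m t) (hn : 2 * m t ≤ n)
    {ξ l h : ℝ} (hξ : 0 ≤ ξ) (hl : 0 ≤ l) (hq0 : ∀ k, 0 ≤ q k)
    (hql : ∀ L, 0 < q ⟨t, L⟩ → l / n ^ h ≤ q ⟨t, L⟩)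
    (hpair : ∀ i j : Fin n,
      ξ * (Nat.card {L : Fin (m t) ↪ Fin n // (∃ a, L a = i) ∧ ∃ b, L b = j} : ℝ) ≤
        Nat.card {L : Fin (m t) ↪ Fin n // ((∃ a, L a = i) ∧ ∃ b, L b = j) ∧ 0 < q ⟨t, L⟩}) :
    l * ξ / 2 ^ (m t - 1) * (n : ℝ) ^ ((m t : ℝ) - h - 1) ≤
      rowSumNorm (∑ k, q k • completeSub n k) := by
  set P := ∑ k, q k • completeSub n k
  set D : ℝ := ((n - 2).descFactorial (m t - 2) : ℝ) with hD
  have hn0 : (0 : ℝ) < n := by norm_cast; omega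
  let i : Fin n := ⟨0, by omega⟩
  have hentry : ∀ j ∈ univ.erase i, ξ * D * (l / n ^ h) ≤ P i j := fun j hj => calc
    ξ * D * (l / n ^ h)
        ≤ ξ * Nat.card {L : Fin (m t) ↪ Fin n // (∃ a, L a = i) ∧ ∃ b, L b = j} * (l / n ^ h) := by
          gcongr
          have := descFactorial_le_card_embedding_mem_range_pair hm (ne_of_mem_erase hj).symm
          rw [Fintype.card_fin] at this
          rw [hD]
          exact_mod_cast this
    _ ≤ Nat.card {L : Fin (m t) ↪ Fin n // ((∃ a, L a = i) ∧ ∃ b, L b = j) ∧ 0 < q ⟨t, L⟩} *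
          (l / n ^ h) := by gcongr; exact hpair i j
    _ ≤ P i j := card_mul_le_sum_smul_completeSub_apply t (ne_of_mem_erase hj).symm hq0 hql
  calc l * ξ / 2 ^ (m t - 1) * (n : ℝ) ^ ((m t : ℝ) - h - 1)
      = ξ * l * ((n : ℝ) / 2) ^ (m t - 1) / n ^ h := by
        rw [rpow_natCast_sub_one_sub hn0 (by omega), div_pow]; ring
    _ ≤ ξ * l * (((n - 1 : ℕ) : ℝ) * D) / n ^ h := by
        gcongr; exact half_pow_le_mul_descFactorial hm hn
    _ = ∑ j ∈ univ.erase i, ξ * D * (l / n ^ h) := by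
        rw [sum_const, card_erase_of_mem (mem_univ i), card_univ, Fintype.card_fin, nsmul_eq_mul]
        ring
    _ ≤ ∑ j ∈ univ.erase i, P i j := sum_le_sum hentry
    _ ≤ ∑ j, |P i j| := (sum_le_sum fun j _ => le_abs_self _).trans
        (sum_le_sum_of_subset_of_nonneg (erase_subset _ _) fun _ _ _ => abs_nonneg _)
    _ ≤ rowSumNorm P := sum_abs_le_rowSumNorm P i

end ExpectedAdjacency

theorem deltaW_asymptotics_general
    {T : Type} [Fintype T] [Nonempty T]
    (m : T → ℕ) (hm2 : ∀ t, 2 ≤ m t)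
    -- the generating probabilities p_n(t,L)
    (p : (n : ℕ) → (Σ t : T, Fin (m t) ↪ Fin n) → ℝ)
    (hp : ∀ n k, p n k ∈ Set.Icc (0 : ℝ) 1)
    -- the probability spaces and the independent Bernoulli families x(t,L)
    {Ω : ℕ → Type} [∀ n, MeasurableSpace (Ω n)]
    (μ : (n : ℕ) → Measure (Ω n)) [∀ n, IsProbabilityMeasure (μ n)]
    (x : (n : ℕ) → (Σ t : T, Fin (m t) ↪ Fin n) → Ω n → ℝ)
    (hxmeas : ∀ n k, Measurable (x n k))
    (hx01 : ∀ n k ω, x n k ω = 0 ∨ x n k ω = 1)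
    (hxp : ∀ n k, μ n {ω | x n k ω = 1} = ENNReal.ofReal (p n k))
    -- the weighted adjacency matrix, its expectation, and Δ_w
    (Aw : (n : ℕ) → Ω n → Matrix (Fin n) (Fin n) ℝ)
    (hAw : ∀ n ω, Aw n ω = ∑ k, x n k ω • completeSub n k)
    (EAw : (n : ℕ) → Matrix (Fin n) (Fin n) ℝ)
    (hEAw : ∀ n i j, EAw n i j = ∫ ω, Aw n ω i j ∂(μ n))
    (Δw : ℕ → ℝ) (hΔw : ∀ n, Δw n = rowSumNorm (EAw n))
    -- Assumption (A5)
    (h l u : T → ℝ)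
    (hl : ∀ t, 0 < l t) (hlu : ∀ t, l t < u t)
    (hh1 : ∀ t, (m t : ℝ) - 2 < h t) (hh2 : ∀ t, h t < (m t : ℝ) - 1)
    (hA5 : ∀ n k, p n k = 0 ∨
      ∃ b ∈ Set.Icc (l k.1) (u k.1), p n k = b / (n : ℝ) ^ (h k.1))
    -- Assumption (A6)
    (ξ : T → ℝ) (hξ : ∀ t, ξ t ∈ Set.Ioo (0 : ℝ) 1)
    (hA6b : ∀ (n : ℕ) (t : T) (i j : Fin n),
      ξ t * (Nat.card {L : Fin (m t) ↪ Fin n // (∃ a, L a = i) ∧ (∃ b, L b = j)} : ℝ) ≤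
        (Nat.card {L : Fin (m t) ↪ Fin n //
          ((∃ a, L a = i) ∧ (∃ b, L b = j)) ∧ 0 < p n ⟨t, L⟩} : ℝ))
    (γ : ℝ) (hγ : γ = ⨆ t : T, ((m t : ℝ) - h t - 1)) :
    (0 < γ ∧ γ ≤ 1) ∧
    ∃ (c₁ c₂ : ℝ) (N : ℕ), 0 < c₁ ∧ c₁ ≤ c₂ ∧
      ∀ n : ℕ, N ≤ n →
        c₁ * (n : ℝ) ^ γ ≤ Δw n ∧ Δw n ≤ c₂ * (n : ℝ) ^ γ := by
  obtain ⟨t₀, ht₀⟩ := Finite.exists_max fun t => (m t : ℝ) - h t - 1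
  obtain rfl : γ = m t₀ - h t₀ - 1 :=
    hγ ▸ le_antisymm (ciSup_le ht₀)
      (le_ciSup (f := fun t => (m t : ℝ) - h t - 1) (Set.finite_range _).bddAbove t₀)
  have hEAw_eq : ∀ n, EAw n = ∑ k, p n k • completeSub n k := fun n => Matrix.ext fun i j => by
    simp only [hEAw, hAw]
    rw [integral_sum_smul_apply_of_zero_or_one (hxmeas n) (hx01 n)]
    simp only [Matrix.sum_apply, Matrix.smul_apply, smul_eq_mul, measureReal_def, hxp]
    exact sum_congr rfl fun k _ => by rw [ENNReal.toReal_ofReal (hp n k).1]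
  have hpu : ∀ n k, p n k ≤ u k.1 / (n : ℝ) ^ h k.1 := fun n k => by
    rcases hA5 n k with hpk | ⟨b, hb, hpk⟩ <;> rw [hpk]
    · exact div_nonneg ((hl _).trans (hlu _)).le (by positivity)
    · gcongr; exact hb.2
  have hpl : ∀ n k, 0 < p n k → l k.1 / (n : ℝ) ^ h k.1 ≤ p n k := fun n k hpos => by
    rcases hA5 n k with hpk | ⟨b, hb, hpk⟩
    · exact absurd hpk hpos.ne'
    · rw [hpk]; gcongr; exact hb.1
  refine ⟨⟨by linarith [hh2 t₀], by linarith [hh1 t₀]⟩, l t₀ * ξ t₀ / 2 ^ (m t₀ - 1),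
    max (l t₀ * ξ t₀ / 2 ^ (m t₀ - 1)) (∑ t, (m t : ℝ) ^ 2 * u t), 2 * m t₀,
    div_pos (mul_pos (hl t₀) (hξ t₀).1) (by positivity), le_max_left _ _, fun n hn => ?_⟩
  rw [hΔw, hEAw_eq]
  refine ⟨le_rowSumNorm_sum_smul_completeSub t₀ (hm2 t₀) hn (hξ t₀).1.le (hl t₀).le
    (fun k => (hp n k).1) (fun L => hpl n ⟨t₀, L⟩) (hA6b n t₀), ?_⟩
  refine (rowSumNorm_sum_smul_completeSub_le (fun t => by linarith [hm2 t]) (by linarith [hm2 t₀])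
    (fun k => (hp n k).1) (fun t => ((hl t).trans (hlu t)).le) (hpu n) ht₀).trans ?_
  gcongr
  exact le_max_right _ _

/-- Lemma 8. Under (A5) and (A6), with `γ = max_t (m_t − h_t − 1)`,
one has `γ ∈ (0,1]` and `Δ_w(n) = Θ(n^γ)`. -/
theorem deltaW_asymptotics
    {T : Type} [Fintype T] [DecidableEq T] [Nonempty T]
    (m : T → ℕ) (hm2 : ∀ t, 2 ≤ m t)
    -- the generating probabilities p_n(t,L)
    (p : (n : ℕ) → (Σ t : T, Fin (m t) ↪ Fin n) → ℝ)
    (hp : ∀ n k, p n k ∈ Set.Icc (0 : ℝ) 1)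
    -- the probability spaces and the independent Bernoulli families x(t,L)
    {Ω : ℕ → Type} [∀ n, MeasurableSpace (Ω n)]
    (μ : (n : ℕ) → Measure (Ω n)) [∀ n, IsProbabilityMeasure (μ n)]
    (x : (n : ℕ) → (Σ t : T, Fin (m t) ↪ Fin n) → Ω n → ℝ)
    (hxmeas : ∀ n k, Measurable (x n k))
    (hx01 : ∀ n k ω, x n k ω = 0 ∨ x n k ω = 1)
    (hxp : ∀ n k, μ n {ω | x n k ω = 1} = ENNReal.ofReal (p n k))
    (hindep : ∀ n, iIndepFun (x n) (μ n))
    -- the weighted adjacency matrix, its expectation, and Δ_w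
    (Aw : (n : ℕ) → Ω n → Matrix (Fin n) (Fin n) ℝ)
    (hAw : ∀ n ω, Aw n ω = ∑ k, x n k ω • completeSub n k)
    (EAw : (n : ℕ) → Matrix (Fin n) (Fin n) ℝ)
    (hEAw : ∀ n i j, EAw n i j = ∫ ω, Aw n ω i j ∂(μ n))
    (Δw : ℕ → ℝ) (hΔw : ∀ n, Δw n = rowSumNorm (EAw n))
    -- Assumption (A5)
    (h l u : T → ℝ)
    (hl : ∀ t, 0 < l t) (hlu : ∀ t, l t < u t)
    (hh1 : ∀ t, (m t : ℝ) - 2 < h t) (hh2 : ∀ t, h t < (m t : ℝ) - 1)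
    (hA5 : ∀ n k, p n k = 0 ∨
      ∃ b ∈ Set.Icc (l k.1) (u k.1), p n k = b / (n : ℝ) ^ (h k.1))
    -- Assumption (A6)
    (ξ : T → ℝ) (hξ : ∀ t, ξ t ∈ Set.Ioo (0 : ℝ) 1)
    (hA6a : ∀ (n : ℕ) (t : T),
      ξ t * (Nat.card (Fin (m t) ↪ Fin n) : ℝ) ≤
        (Nat.card {L : Fin (m t) ↪ Fin n // 0 < p n ⟨t, L⟩} : ℝ))
    (hA6b : ∀ (n : ℕ) (t : T) (i j : Fin n),
      ξ t * (Nat.card {L : Fin (m t) ↪ Fin n // (∃ a, L a = i) ∧ (∃ b, L b = j)} : ℝ) ≤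
        (Nat.card {L : Fin (m t) ↪ Fin n //
          ((∃ a, L a = i) ∧ (∃ b, L b = j)) ∧ 0 < p n ⟨t, L⟩} : ℝ))
    (γ : ℝ) (hγ : γ = ⨆ t : T, ((m t : ℝ) - h t - 1)) :
    (0 < γ ∧ γ ≤ 1) ∧
    ∃ (c₁ c₂ : ℝ) (N : ℕ), 0 < c₁ ∧ c₁ ≤ c₂ ∧
      ∀ n : ℕ, N ≤ n →
        c₁ * (n : ℝ) ^ γ ≤ Δw n ∧ Δw n ≤ c₂ * (n : ℝ) ^ γ :=
  deltaW_asymptotics_general m hm2 p hp μ x hxmeas hx01 hxp Aw hAw EAw hEAw Δw hΔw h l u hl hlu hh1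
    hh2 hA5 ξ hξ hA6b γ hγ
end

section
/- Under Assumptions (A5) and (A6), for every ε ∈ (0,1) there exists a sequence φ(n) → 0 and N ∈ ℕ such that for all n ≥ N, with probability at least 1 − ε, the degree centralities of the normalized weighted adjacency matrix Ā(n) := A_w(n)/Δ_w(n) satisfy (1/n)·‖Ā(n)𝟙 − E[Ā(n)]𝟙‖₁ ≤ φ(n), where 𝟙 is the all-ones vector and ‖·‖₁ the ℓ¹ norm on ℝⁿ. -/
open MeasureTheory ProbabilityTheory Matrix Filter

/-! The degree of vertex `i` is `Dᵢ = ∑ₖ xₖ rₖ(i)`, a weighted sum of independent Bernoulli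
variables whose weights `rₖ(i)` (row sums of the clique matrices) are at most `M = ∑ₜ mₜ`;
hence `Var Dᵢ ≤ M 𝔼Dᵢ ≤ M Δ`. Markov's inequality for `∑ᵢ (Dᵢ - 𝔼Dᵢ)²` and Cauchy–Schwarz
give, with probability at least `1 - ε`, `(1/n) ∑ᵢ |Dᵢ - 𝔼Dᵢ| / Δ ≤ √(M / (ε Δ))`.

It remains to see that `Δ → ∞`. By (A6) with `i = j`, a fixed vertex lies in at least
`ξ (n-1)⋯(n-m+1) ≥ ξ (n/2)^(m-1)` lists of type `t` with positive probability, and by (A5)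
each of them contributes at least `l / n^h` to its expected degree, so `Δ ≥ c n^(m-1-h)` with
`m - 1 - h > 0`. -/

open Finset

lemma mulVec_one_le_rowSumNorm {n : ℕ} (A : Matrix (Fin n) (Fin n) ℝ) (i : Fin n) :
    (A *ᵥ fun _ => 1) i ≤ rowSumNorm A :=
  calc (A *ᵥ fun _ => 1) i = ∑ j, A i j := by simp [mulVec, dotProduct]
    _ ≤ ∑ j, |A i j| := sum_le_sum fun j _ => le_abs_self _
    _ ≤ rowSumNorm A := le_ciSup (f := fun i => ∑ j, |A i j|) (Set.finite_range _).bddAbove i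

lemma sum_smul_mulVec_apply {ι κ K : Type*} [Fintype κ] [Fintype K] (c : K → ℝ)
    (C : K → Matrix ι κ ℝ) (v : κ → ℝ) (i : ι) :
    ((∑ k, c k • C k) *ᵥ v) i = ∑ k, c k * (C k *ᵥ v) i := by
  simp [sum_mulVec, smul_mulVec]

lemma sqrt_mul_div_div_self {R Δ ε : ℝ} (hΔ : 0 < Δ) :
    √(R * Δ / ε) / Δ = √(R / (ε * Δ)) := by
  rw [div_eq_iff hΔ.ne']
  calc √(R * Δ / ε) = √(R / (ε * Δ) * Δ ^ 2) := by congr 1; field_simp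
    _ = √(R / (ε * Δ)) * Δ := by rw [Real.sqrt_mul' _ (sq_nonneg _), Real.sqrt_sq hΔ.le]

lemma tendsto_sqrt_div_mul_rpow_atTop (b : ℝ) {a δ : ℝ} (ha : 0 < a) (hδ : 0 < δ) :
    Tendsto (fun n : ℕ => √(b / (a * (n : ℝ) ^ δ))) atTop (nhds 0) := by
  have hden : Tendsto (fun n : ℕ => a * (n : ℝ) ^ δ) atTop atTop :=
    ((tendsto_rpow_atTop hδ).comp tendsto_natCast_atTop_atTop).const_mul_atTop ha
  have := (Real.continuous_sqrt.tendsto 0).comp ((tendsto_const_nhds (x := b)).div_atTop hden)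
  rwa [Real.sqrt_zero] at this

section Probability

variable {Ω : Type*} [MeasurableSpace Ω] {μ : Measure Ω} {f : Ω → ℝ}

lemma integral_eq_of_eq_zero_or_eq_one (hf : Measurable f) (h01 : ∀ ω, f ω = 0 ∨ f ω = 1)
    {q : ℝ} (hq : 0 ≤ q) (hμ : μ {ω | f ω = 1} = ENNReal.ofReal q) : ∫ ω, f ω ∂μ = q := by
  have hf_eq : f = {ω | f ω = 1}.indicator 1 := by
    funext ω
    rcases h01 ω with hω | hω <;> simp [hω]
  calc ∫ ω, f ω ∂μ = ∫ ω, {ω | f ω = 1}.indicator 1 ω ∂μ := by rw [← hf_eq]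
    _ = q := by
      have hs : MeasurableSet {ω | f ω = 1} := hf (measurableSet_singleton 1)
      rw [integral_indicator_one hs, measureReal_def, hμ, ENNReal.toReal_ofReal hq]

lemma memLp_of_eq_zero_or_eq_one [IsFiniteMeasure μ] (hf : Measurable f)
    (h01 : ∀ ω, f ω = 0 ∨ f ω = 1) (p : ENNReal) : MemLp f p μ :=
  .of_bound hf.aestronglyMeasurable 1 <| .of_forall fun ω => by
    rcases h01 ω with hω | hω <;> simp [hω]

lemma variance_le_integral_of_eq_zero_or_eq_one [IsProbabilityMeasure μ] (hf : Measurable f)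
    (h01 : ∀ ω, f ω = 0 ∨ f ω = 1) : variance f μ ≤ ∫ ω, f ω ∂μ := by
  have hsq : f ^ 2 = f := by
    funext ω
    rcases h01 ω with hω | hω <;> simp [hω]
  rw [variance_eq_sub (memLp_of_eq_zero_or_eq_one hf h01 2), hsq]
  nlinarith [sq_nonneg (∫ ω, f ω ∂μ)]

lemma variance_sum_mul_le_mul_integral [IsProbabilityMeasure μ] {ι : Type*} [Fintype ι]
    {x : ι → Ω → ℝ} (hind : iIndepFun x μ) (hmeas : ∀ k, Measurable (x k))
    (h01 : ∀ k ω, x k ω = 0 ∨ x k ω = 1) {w : ι → ℝ} {R : ℝ} (hw0 : ∀ k, 0 ≤ w k)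
    (hwR : ∀ k, w k ≤ R) :
    variance (fun ω => ∑ k, w k * x k ω) μ ≤ R * ∫ ω, ∑ k, w k * x k ω ∂μ := by
  have hx : ∀ k, MemLp (x k) 2 μ := fun k => memLp_of_eq_zero_or_eq_one (hmeas k) (h01 k) 2
  have hpair : Set.Pairwise ↑(univ : Finset ι) fun k l => IndepFun (w k • x k) (w l • x l) μ :=
    fun k _ l _ hkl => (hind.indepFun hkl).comp (measurable_const_mul (w k))
      (measurable_const_mul (w l))
  have hsum : (fun ω => ∑ k, w k * x k ω) = ∑ k, w k • x k := by ext; simp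
  rw [hsum, IndepFun.variance_sum (fun k _ => (hx k).const_smul (w k)) hpair, ← hsum,
    integral_finsetSum _ fun k _ => ((hx k).integrable one_le_two).const_mul (w k), mul_sum]
  refine sum_le_sum fun k _ => ?_
  have hmean : 0 ≤ ∫ ω, x k ω ∂μ :=
    integral_nonneg fun ω => by rcases h01 k ω with hω | hω <;> simp [hω]
  calc variance (w k • x k) μ = w k ^ 2 * variance (x k) μ := variance_smul _ _ _
    _ ≤ w k ^ 2 * ∫ ω, x k ω ∂μ := by
      gcongr
      exact variance_le_integral_of_eq_zero_or_eq_one (hmeas k) (h01 k)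
    _ ≤ R * (w k * ∫ ω, x k ω ∂μ) := by
      rw [sq, mul_assoc]
      exact mul_le_mul_of_nonneg_right (hwR k) (mul_nonneg (hw0 k) hmean)
    _ = R * ∫ ω, w k * x k ω ∂μ := by rw [integral_const_mul]

lemma ofReal_one_sub_le_measure_compl [IsProbabilityMeasure μ] {s : Set Ω} {ε : ℝ}
    (hε : 0 ≤ ε) (hs : μ s ≤ ENNReal.ofReal ε) : ENNReal.ofReal (1 - ε) ≤ μ sᶜ := by
  rw [ENNReal.ofReal_sub 1 hε, ENNReal.ofReal_one, tsub_le_iff_right]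
  calc 1 = μ Set.univ := measure_univ.symm
    _ ≤ μ s + μ sᶜ := measure_univ_le_add_compl s
    _ ≤ μ sᶜ + ENNReal.ofReal ε := by rw [add_comm]; gcongr

lemma ofReal_one_sub_le_measure_sum_abs_sub_integral_le [IsProbabilityMeasure μ] {ι : Type*}
    [Fintype ι] [Nonempty ι] {Y : ι → Ω → ℝ} (hY : ∀ i, MemLp (Y i) 2 μ) {v ε : ℝ}
    (hv : 0 < v) (hε : 0 < ε) (hvar : ∀ i, variance (Y i) μ ≤ v) :
    ENNReal.ofReal (1 - ε) ≤
      μ {ω | ∑ i, |Y i ω - ∫ ω', Y i ω' ∂μ| ≤ Fintype.card ι * √(v / ε)} := by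
  set S : Ω → ℝ := fun ω => ∑ i, (Y i ω - ∫ ω', Y i ω' ∂μ) ^ 2
  set K : ℝ := Fintype.card ι * v / ε
  have hK : 0 < K := by positivity
  have hsq : ∀ i, Integrable (fun ω => (Y i ω - ∫ ω', Y i ω' ∂μ) ^ 2) μ :=
    fun i => ((hY i).sub (memLp_const _)).integrable_sq
  have hES : ∫ ω, S ω ∂μ ≤ K * ε := by
    rw [integral_finsetSum _ fun i _ => hsq i]
    calc ∑ i, ∫ ω, (Y i ω - ∫ ω', Y i ω' ∂μ) ^ 2 ∂μ = ∑ i, variance (Y i) μ :=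
          sum_congr rfl fun i _ => (variance_eq_integral (hY i).aemeasurable).symm
      _ ≤ ∑ _i : ι, v := sum_le_sum fun i _ => hvar i
      _ = K * ε := by rw [sum_const, card_univ, nsmul_eq_mul]; simp only [K]; field_simp
  have hmarkov : μ {ω | K ≤ S ω} ≤ ENNReal.ofReal ε := by
    rw [ENNReal.le_ofReal_iff_toReal_le (measure_ne_top _ _) hε.le, ← measureReal_def]
    refine le_of_mul_le_mul_left ?_ hK
    exact (mul_meas_ge_le_integral_of_nonneg
      (.of_forall fun ω => sum_nonneg fun i _ => sq_nonneg _)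
      (integrable_finsetSum _ fun i _ => hsq i) K).trans hES
  refine (ofReal_one_sub_le_measure_compl hε.le hmarkov).trans (measure_mono fun ω hω => ?_)
  replace hω : S ω < K := not_le.mp hω
  change ∑ i, |Y i ω - ∫ ω', Y i ω' ∂μ| ≤ Fintype.card ι * √(v / ε)
  rw [← pow_le_pow_iff_left₀ (sum_nonneg fun i _ => abs_nonneg _) (by positivity) two_ne_zero]
  calc (∑ i, |Y i ω - ∫ ω', Y i ω' ∂μ|) ^ 2
      ≤ Fintype.card ι * S ω := by
        simpa [sq_abs] using sq_sum_le_card_mul_sum_sq (s := univ)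
          (f := fun i => |Y i ω - ∫ ω', Y i ω' ∂μ|)
    _ ≤ Fintype.card ι * K := by gcongr
    _ = (Fintype.card ι * √(v / ε)) ^ 2 := by
        rw [mul_pow, Real.sq_sqrt (by positivity)]; ring

lemma eq_sum_integral_smul {ι κ K : Type*} [Fintype K] {x : K → Ω → ℝ}
    (hx : ∀ k, Integrable (x k) μ) {C : K → Matrix ι κ ℝ} {A : Ω → Matrix ι κ ℝ}
    (hA : ∀ ω, A ω = ∑ k, x k ω • C k) {EA : Matrix ι κ ℝ}
    (hEA : ∀ i j, EA i j = ∫ ω, A ω i j ∂μ) :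
    EA = ∑ k, (∫ ω, x k ω ∂μ) • C k := by
  ext i j
  simp only [hEA, hA, Matrix.sum_apply, Matrix.smul_apply, smul_eq_mul]
  rw [integral_finsetSum _ fun k _ => (hx k).mul_const _]
  simp_rw [integral_mul_const]

theorem ofReal_one_sub_le_measure_normalized_degree_deviation_le [IsProbabilityMeasure μ]
    {n : ℕ} [NeZero n] {K : Type*} [Fintype K] {x : K → Ω → ℝ} (hind : iIndepFun x μ)
    (hmeas : ∀ k, Measurable (x k)) (h01 : ∀ k ω, x k ω = 0 ∨ x k ω = 1)
    {C : K → Matrix (Fin n) (Fin n) ℝ} {R : ℝ} (hR : 0 < R)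
    (hC0 : ∀ k i, 0 ≤ (C k *ᵥ fun _ => 1) i) (hCR : ∀ k i, (C k *ᵥ fun _ => 1) i ≤ R)
    {A : Ω → Matrix (Fin n) (Fin n) ℝ} (hA : ∀ ω, A ω = ∑ k, x k ω • C k)
    {EA : Matrix (Fin n) (Fin n) ℝ} (hEA : ∀ i j, EA i j = ∫ ω, A ω i j ∂μ)
    (hΔ : 0 < rowSumNorm EA) {ε : ℝ} (hε : 0 < ε) :
    ENNReal.ofReal (1 - ε) ≤
      μ {ω | (1 / (n : ℝ)) *
        ∑ i, |(((rowSumNorm EA)⁻¹ • A ω) *ᵥ (fun _ => 1)) i -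
              (((rowSumNorm EA)⁻¹ • EA) *ᵥ (fun _ => 1)) i| ≤ √(R / (ε * rowSumNorm EA))} := by
  set Δ := rowSumNorm EA
  set Y : Fin n → Ω → ℝ := fun i ω => (A ω *ᵥ fun _ => 1) i
  have hY : ∀ i, Y i = fun ω => ∑ k, (C k *ᵥ fun _ => 1) i * x k ω := fun i => by
    ext ω; simp only [Y, hA, sum_smul_mulVec_apply, mul_comm]
  have hx : ∀ k, MemLp (x k) 2 μ := fun k => memLp_of_eq_zero_or_eq_one (hmeas k) (h01 k) 2
  have hYmem : ∀ i, MemLp (Y i) 2 μ := fun i => by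
    rw [hY]; exact memLp_finsetSum _ fun k _ => (hx k).const_mul _
  have hYmean : ∀ i, ∫ ω, Y i ω ∂μ = (EA *ᵥ fun _ => 1) i := fun i => by
    rw [hY, eq_sum_integral_smul (fun k => (hx k).integrable one_le_two) hA hEA,
      sum_smul_mulVec_apply,
      integral_finsetSum _ fun k _ => ((hx k).integrable one_le_two).const_mul _]
    simp_rw [integral_const_mul, mul_comm]
  have hvar : ∀ i, variance (Y i) μ ≤ R * Δ := fun i =>
    calc variance (Y i) μ ≤ R * ∫ ω, Y i ω ∂μ := by
          rw [hY]; exact variance_sum_mul_le_mul_integral hind hmeas h01 (hC0 · i) (hCR · i)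
      _ ≤ R * Δ := by rw [hYmean]; gcongr; exact mulVec_one_le_rowSumNorm EA i
  refine (ofReal_one_sub_le_measure_sum_abs_sub_integral_le hYmem (by positivity) hε hvar).trans
    (measure_mono fun ω hω => ?_)
  have hn : (0 : ℝ) < n := by exact_mod_cast Nat.pos_of_neZero n
  simp only [Fintype.card_fin, hYmean, Set.mem_ofPred_eq] at hω ⊢
  simp only [smul_mulVec, Pi.smul_apply, smul_eq_mul, ← mul_sub, abs_mul,
    abs_inv, abs_of_pos hΔ, ← mul_sum, ← sqrt_mul_div_div_self hΔ]
  calc 1 / (n : ℝ) * (Δ⁻¹ * ∑ i, |(A ω *ᵥ fun _ => 1) i - (EA *ᵥ fun _ => 1) i|)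
      ≤ 1 / n * (Δ⁻¹ * (n * √(R * Δ / ε))) := by gcongr
    _ = √(R * Δ / ε) / Δ := by field_simp

end Probability

lemma descFactorial_le_card_embedding_exists_apply_eq {α : Type*} [Fintype α] [DecidableEq α]
    {m : ℕ} (hm : 0 < m) (i : α) :
    (Fintype.card α - 1).descFactorial (m - 1) ≤ Nat.card {L : Fin m ↪ α // ∃ a, L a = i} := by
  obtain ⟨m, rfl⟩ : ∃ m', m = m' + 1 := ⟨m - 1, by omega⟩
  -- a list starting with `i` is `i` followed by an injection of the other entries into `α ∖ {i}`
  let F (e : Fin m ↪ {x // x ≠ i}) : {L : Fin (m + 1) ↪ α // ∃ a, L a = i} :=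
    ⟨(Equiv.embeddingFinSucc m α).symm
      ⟨e.trans (Function.Embedding.subtype _), i, fun ⟨a, ha⟩ => (e a).2 ha⟩, 0, by simp⟩
  have hF : Function.Injective F := fun e e' h => by
    ext a
    simpa [F] using congrFun (congrArg (⇑) (congrArg Subtype.val h)) a.succ
  calc (Fintype.card α - 1).descFactorial (m + 1 - 1) = Nat.card (Fin m ↪ {x // x ≠ i}) := by
        simp [Nat.card_eq_fintype_card, Fintype.card_embedding_eq]
    _ ≤ _ := Nat.card_le_card_of_injective F hF

lemma half_pow_le_descFactorial_pred {n m : ℕ} (h : 2 * m ≤ n) :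
    ((n : ℝ) / 2) ^ m ≤ (n - 1).descFactorial m := by
  have hm : (2 * m : ℝ) ≤ n := by exact_mod_cast h
  calc ((n : ℝ) / 2) ^ m ≤ ((n - m : ℕ) : ℝ) ^ m := by
        gcongr
        rw [Nat.cast_sub (by omega)]
        linarith
    _ ≤ (n - 1).descFactorial m := by
        exact_mod_cast (Nat.pow_le_pow_left (by omega) m).trans
          (Nat.pow_sub_le_descFactorial (n - 1) m)

section CompleteSub

variable {T : Type} {m : T → ℕ} {n : ℕ}

lemma completeSub_mulVec_one_apply (k : Σ t : T, Fin (m t) ↪ Fin n) (i : Fin n) :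
    (completeSub n k *ᵥ fun _ => 1) i = if ∃ a, k.2 a = i then (m k.1 : ℝ) - 1 else 0 := by
  classical
  simp only [mulVec, dotProduct, completeSub, mul_one]
  rw [sum_boole]
  split_ifs with hi
  · obtain ⟨a, rfl⟩ := hi
    have hfilter : ({j | k.2 a ≠ j ∧ (∃ a', k.2 a' = k.2 a) ∧ ∃ b, k.2 b = j} : Finset _) =
        (univ.map k.2).erase (k.2 a) := by
      ext j; simp [ne_comm]
    rw [hfilter, card_erase_of_mem (mem_map_of_mem _ (mem_univ a)), card_map, card_univ,
      Fintype.card_fin, Nat.cast_pred (Fin.pos a)]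
  · simp [hi]

lemma completeSub_mulVec_one_apply_nonneg (k : Σ t : T, Fin (m t) ↪ Fin n) (i : Fin n) :
    0 ≤ (completeSub n k *ᵥ fun _ => 1) i := by
  rw [completeSub_mulVec_one_apply]
  split_ifs with hi
  · obtain ⟨a, -⟩ := hi
    have : (1 : ℝ) ≤ m k.1 := by exact_mod_cast Fin.pos a
    linarith
  · rfl

lemma completeSub_mulVec_one_apply_le (k : Σ t : T, Fin (m t) ↪ Fin n) (i : Fin n) :
    (completeSub n k *ᵥ fun _ => 1) i ≤ m k.1 := by
  rw [completeSub_mulVec_one_apply]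
  split_ifs <;> linarith [(Nat.cast_nonneg (m k.1) : (0 : ℝ) ≤ m k.1)]

variable [Fintype T] {p : (Σ t : T, Fin (m t) ↪ Fin n) → ℝ} {t : T}

lemma card_mul_le_sum_smul_completeSub_mulVec_one (hp : ∀ k, 0 ≤ p k) (hm : 2 ≤ m t) {b : ℝ}
    (hpb : ∀ L, 0 < p ⟨t, L⟩ → b ≤ p ⟨t, L⟩) (i : Fin n) :
    Nat.card {L : Fin (m t) ↪ Fin n // (∃ a, L a = i) ∧ 0 < p ⟨t, L⟩} * b ≤
      ((∑ k, p k • completeSub n k) *ᵥ fun _ => 1) i := by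
  classical
  set r : (Σ t : T, Fin (m t) ↪ Fin n) → ℝ := fun k => (completeSub n k *ᵥ fun _ => 1) i
  have hterm : ∀ k, 0 ≤ p k * r k := fun k =>
    mul_nonneg (hp k) (completeSub_mulVec_one_apply_nonneg k i)
  have hlarge : ∀ L ∈ ({L | (∃ a, L a = i) ∧ 0 < p ⟨t, L⟩} : Finset _),
      b ≤ p ⟨t, L⟩ * r ⟨t, L⟩ := fun L hL => by
    obtain ⟨hi, hpos⟩ := (mem_filter.mp hL).2
    have hr : 1 ≤ r ⟨t, L⟩ := by
      simp only [r, completeSub_mulVec_one_apply, if_pos hi]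
      have : (2 : ℝ) ≤ m t := by exact_mod_cast hm
      linarith
    exact (hpb L hpos).trans (le_mul_of_one_le_right hpos.le hr)
  rw [Nat.card_eq_fintype_card, Fintype.card_subtype, sum_smul_mulVec_apply, ← nsmul_eq_mul]
  calc _ ≤ ∑ L ∈ ({L | (∃ a, L a = i) ∧ 0 < p ⟨t, L⟩} : Finset _), p ⟨t, L⟩ * r ⟨t, L⟩ :=
        card_nsmul_le_sum _ _ _ hlarge
    _ ≤ ∑ L, p ⟨t, L⟩ * r ⟨t, L⟩ :=
        sum_le_sum_of_subset_of_nonneg (subset_univ _) fun L _ _ => hterm _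
    _ ≤ ∑ t', ∑ L, p ⟨t', L⟩ * r ⟨t', L⟩ :=
        single_le_sum (f := fun t' => ∑ L, p ⟨t', L⟩ * r ⟨t', L⟩)
          (fun t' _ => sum_nonneg fun L _ => hterm _) (mem_univ t)
    _ = ∑ k, p k * r k := (Fintype.sum_sigma (fun k => p k * r k)).symm

lemma mul_rpow_le_rowSumNorm_sum_smul_completeSub (hp : ∀ k, 0 ≤ p k) (hm : 2 ≤ m t)
    (hmn : 2 * m t ≤ n) (i : Fin n) {ξ l h : ℝ} (hξ : 0 ≤ ξ) (hl : 0 ≤ l)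
    (hpl : ∀ L, 0 < p ⟨t, L⟩ → l / n ^ h ≤ p ⟨t, L⟩)
    (hdense : ξ * Nat.card {L : Fin (m t) ↪ Fin n // ∃ a, L a = i} ≤
      Nat.card {L : Fin (m t) ↪ Fin n // (∃ a, L a = i) ∧ 0 < p ⟨t, L⟩}) :
    ξ * l / 2 ^ (m t - 1) * (n : ℝ) ^ ((m t : ℝ) - 1 - h) ≤
      rowSumNorm (∑ k, p k • completeSub n k) := by
  have hn : (0 : ℝ) < n := by exact_mod_cast (by omega : 0 < n)
  calc ξ * l / 2 ^ (m t - 1) * (n : ℝ) ^ ((m t : ℝ) - 1 - h)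
      = ξ * ((n : ℝ) / 2) ^ (m t - 1) * (l / n ^ h) := by
        rw [Real.rpow_sub hn, ← Nat.cast_pred (by omega), Real.rpow_natCast, div_pow]
        ring
    _ ≤ ξ * (n - 1).descFactorial (m t - 1) * (l / n ^ h) := by
        gcongr
        exact half_pow_le_descFactorial_pred (by omega)
    _ ≤ ξ * Nat.card {L : Fin (m t) ↪ Fin n // ∃ a, L a = i} * (l / n ^ h) := by
        gcongr
        simpa using descFactorial_le_card_embedding_exists_apply_eq (by omega : 0 < m t) i
    _ ≤ Nat.card {L : Fin (m t) ↪ Fin n // (∃ a, L a = i) ∧ 0 < p ⟨t, L⟩} * (l / n ^ h) := by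
        gcongr
    _ ≤ ((∑ k, p k • completeSub n k) *ᵥ fun _ => 1) i :=
        card_mul_le_sum_smul_completeSub_mulVec_one hp hm hpl i
    _ ≤ rowSumNorm (∑ k, p k • completeSub n k) := mulVec_one_le_rowSumNorm _ i

end CompleteSub

theorem degree_centrality_convergence_general
    {T : Type} [Fintype T] [Nonempty T]
    (m : T → ℕ) (hm2 : ∀ t, 2 ≤ m t)
    -- the generating probabilities p_n(t,L)
    (p : (n : ℕ) → (Σ t : T, Fin (m t) ↪ Fin n) → ℝ)
    (hp : ∀ n k, p n k ∈ Set.Icc (0 : ℝ) 1)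
    -- the probability spaces and the independent Bernoulli families x(t,L)
    {Ω : ℕ → Type} [∀ n, MeasurableSpace (Ω n)]
    (μ : (n : ℕ) → Measure (Ω n)) [∀ n, IsProbabilityMeasure (μ n)]
    (x : (n : ℕ) → (Σ t : T, Fin (m t) ↪ Fin n) → Ω n → ℝ)
    (hxmeas : ∀ n k, Measurable (x n k))
    (hx01 : ∀ n k ω, x n k ω = 0 ∨ x n k ω = 1)
    (hxp : ∀ n k, μ n {ω | x n k ω = 1} = ENNReal.ofReal (p n k))
    (hindep : ∀ n, iIndepFun (x n) (μ n))
    -- the weighted adjacency matrix, its expectation, and Δ_w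
    (Aw : (n : ℕ) → Ω n → Matrix (Fin n) (Fin n) ℝ)
    (hAw : ∀ n ω, Aw n ω = ∑ k, x n k ω • completeSub n k)
    (EAw : (n : ℕ) → Matrix (Fin n) (Fin n) ℝ)
    (hEAw : ∀ n i j, EAw n i j = ∫ ω, Aw n ω i j ∂(μ n))
    (Δw : ℕ → ℝ) (hΔw : ∀ n, Δw n = rowSumNorm (EAw n))
    -- Assumption (A5)
    (h l u : T → ℝ)
    (hl : ∀ t, 0 < l t)
    (hh2 : ∀ t, h t < (m t : ℝ) - 1)
    (hA5 : ∀ n k, p n k = 0 ∨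
      ∃ b ∈ Set.Icc (l k.1) (u k.1), p n k = b / (n : ℝ) ^ (h k.1))
    -- Assumption (A6)
    (ξ : T → ℝ) (hξ : ∀ t, ξ t ∈ Set.Ioo (0 : ℝ) 1)
    (hA6b : ∀ (n : ℕ) (t : T) (i j : Fin n),
      ξ t * (Nat.card {L : Fin (m t) ↪ Fin n // (∃ a, L a = i) ∧ (∃ b, L b = j)} : ℝ) ≤
        (Nat.card {L : Fin (m t) ↪ Fin n //
          ((∃ a, L a = i) ∧ (∃ b, L b = j)) ∧ 0 < p n ⟨t, L⟩} : ℝ))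
    : ∀ ε : ℝ, ε ∈ Set.Ioo (0 : ℝ) 1 →
      ∃ φ : ℕ → ℝ, Tendsto φ atTop (nhds 0) ∧
        ∃ N : ℕ, ∀ n : ℕ, N ≤ n →
          ENNReal.ofReal (1 - ε) ≤
            μ n {ω | (1 / (n : ℝ)) *
              ∑ i, |(((Δw n)⁻¹ • Aw n ω) *ᵥ (fun _ => 1)) i -
                    (((Δw n)⁻¹ • EAw n) *ᵥ (fun _ => 1)) i| ≤ φ n} := by
  rintro ε ⟨hε, -⟩
  obtain ⟨t⟩ := ‹Nonempty T›
  set M : ℝ := ∑ t, (m t : ℝ)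
  have hmM : ∀ t, (m t : ℝ) ≤ M := fun t =>
    single_le_sum (fun t _ => Nat.cast_nonneg (m t)) (mem_univ t)
  have hM : 0 < M := lt_of_lt_of_le (by have := hm2 t; positivity) (hmM t)
  set c := ξ t * l t / 2 ^ (m t - 1)
  set δ := (m t : ℝ) - 1 - h t
  have hc : 0 < c := by have := (hξ t).1; have := hl t; positivity
  refine ⟨fun n => √(M / (ε * c * (n : ℝ) ^ δ)),
    tendsto_sqrt_div_mul_rpow_atTop M (by positivity) (by linarith [hh2 t]), 2 * m t,
    fun n hmn => ?_⟩
  have hn : 0 < n := by have := hm2 t; omega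
  have : NeZero n := ⟨hn.ne'⟩
  have hEA : EAw n = ∑ k, p n k • completeSub n k := by
    rw [eq_sum_integral_smul (fun k => (memLp_of_eq_zero_or_eq_one (hxmeas n k) (hx01 n k) 1)
      |>.integrable le_rfl) (hAw n) (hEAw n)]
    simp_rw [integral_eq_of_eq_zero_or_eq_one (hxmeas n _) (hx01 n _) (hp n _).1 (hxp n _)]
  have hpl : ∀ L, 0 < p n ⟨t, L⟩ → l t / n ^ h t ≤ p n ⟨t, L⟩ := fun L hpos => by
    obtain h0 | ⟨b, hb, hpb⟩ := hA5 n ⟨t, L⟩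
    · exact absurd h0 hpos.ne'
    · rw [hpb]; gcongr; exact hb.1
  have hΔ : c * n ^ δ ≤ rowSumNorm (EAw n) := hEA ▸
    mul_rpow_le_rowSumNorm_sum_smul_completeSub (fun k => (hp n k).1) (hm2 t) hmn ⟨0, hn⟩
      (hξ t).1.le (hl t).le hpl (by simpa only [and_self] using hA6b n t ⟨0, hn⟩ ⟨0, hn⟩)
  have hcn : 0 < c * (n : ℝ) ^ δ := mul_pos hc (Real.rpow_pos_of_pos (Nat.cast_pos.mpr hn) δ)
  rw [hΔw n]
  refine (ofReal_one_sub_le_measure_normalized_degree_deviation_le (hindep n) (hxmeas n) (hx01 n)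
    hM completeSub_mulVec_one_apply_nonneg
    (fun k i => (completeSub_mulVec_one_apply_le k i).trans (hmM k.1)) (hAw n) (hEAw n)
    (hcn.trans_le hΔ) hε).trans
    (measure_mono (Set.ofPred_subset_ofPred.mpr fun ω hω => hω.trans ?_))
  dsimp only
  rw [mul_assoc]
  gcongr

/-- Corollary 3, degree centrality. Under (A5) and (A6), for every
`ε ∈ (0,1)` there is a vanishing sequence `φ(n)` such that for `n` large, with probability
at least `1 − ε`, `(1/n)·‖c^d(Ā(n)) − c^d(E[Ā(n)])‖₁ ≤ φ(n)`. -/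
theorem degree_centrality_convergence
    {T : Type} [Fintype T] [DecidableEq T] [Nonempty T]
    (m : T → ℕ) (hm2 : ∀ t, 2 ≤ m t)
    -- the generating probabilities p_n(t,L)
    (p : (n : ℕ) → (Σ t : T, Fin (m t) ↪ Fin n) → ℝ)
    (hp : ∀ n k, p n k ∈ Set.Icc (0 : ℝ) 1)
    -- the probability spaces and the independent Bernoulli families x(t,L)
    {Ω : ℕ → Type} [∀ n, MeasurableSpace (Ω n)]
    (μ : (n : ℕ) → Measure (Ω n)) [∀ n, IsProbabilityMeasure (μ n)]
    (x : (n : ℕ) → (Σ t : T, Fin (m t) ↪ Fin n) → Ω n → ℝ)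
    (hxmeas : ∀ n k, Measurable (x n k))
    (hx01 : ∀ n k ω, x n k ω = 0 ∨ x n k ω = 1)
    (hxp : ∀ n k, μ n {ω | x n k ω = 1} = ENNReal.ofReal (p n k))
    (hindep : ∀ n, iIndepFun (x n) (μ n))
    -- the weighted adjacency matrix, its expectation, and Δ_w
    (Aw : (n : ℕ) → Ω n → Matrix (Fin n) (Fin n) ℝ)
    (hAw : ∀ n ω, Aw n ω = ∑ k, x n k ω • completeSub n k)
    (EAw : (n : ℕ) → Matrix (Fin n) (Fin n) ℝ)
    (hEAw : ∀ n i j, EAw n i j = ∫ ω, Aw n ω i j ∂(μ n))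
    (Δw : ℕ → ℝ) (hΔw : ∀ n, Δw n = rowSumNorm (EAw n))
    -- Assumption (A5)
    (h l u : T → ℝ)
    (hl : ∀ t, 0 < l t) (hlu : ∀ t, l t < u t)
    (hh1 : ∀ t, (m t : ℝ) - 2 < h t) (hh2 : ∀ t, h t < (m t : ℝ) - 1)
    (hA5 : ∀ n k, p n k = 0 ∨
      ∃ b ∈ Set.Icc (l k.1) (u k.1), p n k = b / (n : ℝ) ^ (h k.1))
    -- Assumption (A6)
    (ξ : T → ℝ) (hξ : ∀ t, ξ t ∈ Set.Ioo (0 : ℝ) 1)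
    (hA6a : ∀ (n : ℕ) (t : T),
      ξ t * (Nat.card (Fin (m t) ↪ Fin n) : ℝ) ≤
        (Nat.card {L : Fin (m t) ↪ Fin n // 0 < p n ⟨t, L⟩} : ℝ))
    (hA6b : ∀ (n : ℕ) (t : T) (i j : Fin n),
      ξ t * (Nat.card {L : Fin (m t) ↪ Fin n // (∃ a, L a = i) ∧ (∃ b, L b = j)} : ℝ) ≤
        (Nat.card {L : Fin (m t) ↪ Fin n //
          ((∃ a, L a = i) ∧ (∃ b, L b = j)) ∧ 0 < p n ⟨t, L⟩} : ℝ))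
    : ∀ ε : ℝ, ε ∈ Set.Ioo (0 : ℝ) 1 →
      ∃ φ : ℕ → ℝ, Tendsto φ atTop (nhds 0) ∧
        ∃ N : ℕ, ∀ n : ℕ, N ≤ n →
          ENNReal.ofReal (1 - ε) ≤
            μ n {ω | (1 / (n : ℝ)) *
              ∑ i, |(((Δw n)⁻¹ • Aw n ω) *ᵥ (fun _ => 1)) i -
                    (((Δw n)⁻¹ • EAw n) *ᵥ (fun _ => 1)) i| ≤ φ n} :=
  degree_centrality_convergence_general m hm2 p hp μ x hxmeas hx01 hxp hindep Aw hAw EAw hEAw Δw hΔw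
    h l u hl hh2 hA5 ξ hξ hA6b
end
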